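/- arXiv:2201.11033 — 8 statements merged into one kernel-verified Lean document; each statement's English description precedes it below -/
import Mathlib

section
/- The monoid S presented by generators a, b, x_n, y_n (n ∈ ℤ) and relations a·b·x_n = b·x_n, a·b·y_n = b·y_{n+1} (n ∈ ℤ) is left cancellative, i.e., for all s, t, t' ∈ S, s·t = s·t' implies t = t'. -/
/-- The alphabet of the monoid `S`: letters `a`, `b` and `x n`, `y n` for `n : ℤ`. -/
inductive SGen : Type
  | a : SGen
  | b : SGen
  | x : ℤ → SGen
  | y : ℤ → SGen

/-- The defining relations of `S`: `a·b·x n = b·x n` and `a·b·y n = b·y (n+1)` for `n ∈ ℤ`. -/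
inductive SRel : FreeMonoid SGen → FreeMonoid SGen → Prop
  | xr (n : ℤ) : SRel (.of .a * .of .b * .of (.x n)) (.of .b * .of (.x n))
  | yr (n : ℤ) : SRel (.of .a * .of .b * .of (.y n)) (.of .b * .of (.y (n + 1)))

/-- The monoid `S` presented by the generators `SGen` and the relations `SRel`. -/
abbrev S : Type := PresentedMonoid SRel

/-- The images of the generators in `S`. -/
def gen (g : SGen) : S := PresentedMonoid.of SRel g

/-- The principal right ideal `sS` of a monoid. -/
def rIdeal {M : Type*} [Monoid M] (s : M) : Set M := {m | ∃ u, m = s * u}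

/-!
`S` acts on the left on words over its alphabet: a letter other than `a` is prepended, while `a`
fixes a word beginning with `b x_n`, turns a word beginning with `b y_n` into the one beginning with
`b y_{n+1}`, and is prepended to any other word. This respects the defining relations, every letter
acts injectively, and reading the word `t · []` back in `S` returns `t`. Hence `s t = s t'` gives
`t · [] = t' · []` by injectivity of the action of `s`, and so `t = t'`.
-/

open Function

theorem IsLeftCancelMul.of_injective_apply {M X : Type*} [Monoid M] (φ : M →* Function.End X)
    (x₀ : X) (hφ : ∀ m, Injective (φ m)) (horbit : Injective fun m => φ m x₀) :
    IsLeftCancelMul M where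
  mul_left_cancel s t t' h := horbit <| hφ s <| by
    have h' := congrFun (congrArg φ h) x₀
    rwa [map_mul, map_mul] at h'

namespace PresentedMonoid

variable {α X : Type*} {rels : FreeMonoid α → FreeMonoid α → Prop}
  (φ : PresentedMonoid rels →* Function.End X)

theorem injective_apply_of_injective_apply_of (h : ∀ a, Injective (φ (of rels a)))
    (m : PresentedMonoid rels) : Injective (φ m) := by
  have hm : m ∈ Submonoid.closure (Set.range (of rels)) := by simp
  induction hm using Submonoid.closure_induction with
  | mem _ hx => obtain ⟨a, rfl⟩ := hx; exact h a
  | one => rw [map_one]; exact injective_id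
  | mul m n _ _ hm hn => rw [map_mul]; exact hm.comp hn

theorem apply_eq_mul_of_apply_of_eq_mul (ψ : X → PresentedMonoid rels)
    (h : ∀ a x, ψ (φ (of rels a) x) = of rels a * ψ x) (m : PresentedMonoid rels) (x : X) :
    ψ (φ m x) = m * ψ x := by
  have hm : m ∈ Submonoid.closure (Set.range (of rels)) := by simp
  induction hm using Submonoid.closure_induction generalizing x with
  | mem _ hx => obtain ⟨a, rfl⟩ := hx; exact h a x
  | one => simp only [map_one, one_mul]; rfl
  | mul m n _ _ hm hn => rw [map_mul, mul_assoc, ← hn, ← hm]; rfl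

end PresentedMonoid

namespace SGen

def actA : List SGen → List SGen
  | b :: x n :: w => b :: x n :: w
  | b :: y n :: w => b :: y (n + 1) :: w
  | w => a :: w

def unactA : List SGen → List SGen
  | b :: y n :: w => b :: y (n - 1) :: w
  | a :: w => w
  | w => w

theorem unactA_actA : LeftInverse unactA actA := by
  rintro (_ | ⟨g, _ | ⟨g', w⟩⟩)
  · rfl
  · cases g <;> rfl
  · cases g <;> cases g' <;> simp [actA, unactA]

def act : SGen → Function.End (List SGen)
  | a => actA
  | g => List.cons g

theorem act_injective (g : SGen) : Injective (act g) := by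
  cases g
  case a => exact unactA_actA.injective
  all_goals exact List.cons_injective

end SGen

open SGen

theorem act_respects_SRel (u v : FreeMonoid SGen) (h : SRel u v) :
    FreeMonoid.lift act u = FreeMonoid.lift act v := by
  cases h <;> rfl

def actHom : S →* Function.End (List SGen) := PresentedMonoid.lift act act_respects_SRel

def ofWord (w : List SGen) : S := PresentedMonoid.mk SRel (FreeMonoid.ofList w)

theorem ofWord_nil : ofWord [] = 1 := rfl

theorem ofWord_cons (g : SGen) (w : List SGen) : ofWord (g :: w) = gen g * ofWord w := rfl

theorem gen_a_mul_ofWord_b_x (n : ℤ) (w : List SGen) :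
    gen a * ofWord (b :: x n :: w) = ofWord (b :: x n :: w) := by
  have hrel : gen a * gen b * gen (x n) = gen b * gen (x n) :=
    PresentedMonoid.mk_eq_mk_of_rel (SRel.xr n)
  simp only [ofWord_cons, ← mul_assoc, hrel]

theorem gen_a_mul_ofWord_b_y (n : ℤ) (w : List SGen) :
    gen a * ofWord (b :: y n :: w) = ofWord (b :: y (n + 1) :: w) := by
  have hrel : gen a * gen b * gen (y n) = gen b * gen (y (n + 1)) :=
    PresentedMonoid.mk_eq_mk_of_rel (SRel.yr n)
  simp only [ofWord_cons, ← mul_assoc, hrel]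

theorem ofWord_act (g : SGen) (w : List SGen) : ofWord (act g w) = gen g * ofWord w := by
  cases g
  case a =>
    rcases w with _ | ⟨g, _ | ⟨g', w⟩⟩
    · rfl
    · cases g <;> rfl
    · cases g <;> cases g' <;> first
        | exact (gen_a_mul_ofWord_b_x _ w).symm
        | exact (gen_a_mul_ofWord_b_y _ w).symm
        | rfl
  all_goals rfl

theorem ofWord_actHom (t : S) (w : List SGen) : ofWord (actHom t w) = t * ofWord w :=
  PresentedMonoid.apply_eq_mul_of_apply_of_eq_mul actHom ofWord ofWord_act t w

/-- The monoid `S` is left cancellative. -/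
theorem S_leftCancellative : ∀ s t t' : S, s * t = s * t' → t = t' := by
  have horbit : Injective fun t : S => actHom t [] := fun t t' h => by
    simpa only [ofWord_actHom, ofWord_nil, mul_one] using congrArg ofWord h
  have hcancel : IsLeftCancelMul S :=
    .of_injective_apply actHom [] (PresentedMonoid.injective_apply_of_injective_apply_of actHom
      act_injective) horbit
  exact fun s t t' h => hcancel.mul_left_cancel s h
end

section
/- In the monoid S, the right ideal bS ∩ aS is not a finite union of principal right ideals: there is no finite subset F ⊆ S with bS ∩ aS = ⋃_{f ∈ F} fS. In particular, S is not finitely aligned. -/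
/-- A left cancellative monoid `M` is finitely aligned if for all `s t : M` the right ideal
`sM ∩ tM` is a finite (possibly empty) union of principal right ideals. -/
def FinitelyAligned (M : Type*) [Monoid M] : Prop :=
  ∀ s t : M, ∃ F : Finset M, rIdeal s ∩ rIdeal t = ⋃ f ∈ F, rIdeal f

/-!
Let `S` act on words from the left by prepending a letter and then applying the relations,
oriented as `a·b·xₙ ↦ b·xₙ` and `a·b·yₙ ↦ b·yₙ₊₁`; the image of the empty word is an invariant
`normalForm s`. Every `b·xₙ` lies in `bS ∩ aS`. For `f ∈ bS ∩ aS` the normal form begins with `b`,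
which can only arise from the leading `a` by a rewrite, so it begins with `b xₖ` or `b yₖ₊₁`.
This two-letter prefix survives multiplication on the right, so `b·xₙ ∈ fS` for at most one `n`,
and by pigeonhole no finite set of principal right ideals covers all the `b·xₙ`.
-/

theorem not_exists_finset_eq_biUnion_rIdeal {M ι : Type*} [Monoid M] [Infinite ι] {I : Set M}
    (e : ι → M) (he : ∀ i, e i ∈ I)
    (hI : ∀ f ∈ I, ∀ i j, e i ∈ rIdeal f → e j ∈ rIdeal f → i = j) :
    ¬ ∃ F : Finset M, I = ⋃ f ∈ F, rIdeal f := by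
  rintro ⟨F, rfl⟩
  have hcover (i : ι) : ∃ f ∈ F, e i ∈ rIdeal f := by simpa using he i
  choose φ hφF hφ using hcover
  obtain ⟨i, j, hij, hφij_sub⟩ :=
    Finite.exists_ne_map_eq_of_infinite fun i ↦ (⟨φ i, hφF i⟩ : F)
  have hφi : φ i ∈ ⋃ f ∈ F, rIdeal f := Set.mem_biUnion (hφF i) ⟨1, (mul_one _).symm⟩
  have hφij : φ i = φ j := congrArg Subtype.val hφij_sub
  exact hij (hI _ hφi i j (hφ i) (hφij ▸ hφ j))

namespace SGen

/-- Both relations, oriented left to right, only rewrite at the front of a word, so prepending a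
letter to a reduced word needs at most one rewrite. -/
def consNF : SGen → List SGen → List SGen
  | a, b :: x n :: t => b :: x n :: t
  | a, b :: y n :: t => b :: y (n + 1) :: t
  | g, l => g :: l

theorem consNF_of_ne_a {g : SGen} (hg : g ≠ a) (l : List SGen) : consNF g l = g :: l := by
  cases g <;> first | rfl | exact absurd rfl hg

theorem foldr_consNF_consNF (g : SGen) (l L : List SGen) :
    (consNF g l).foldr consNF L = consNF g (l.foldr consNF L) := by
  fun_cases consNF g l <;> rfl

theorem exists_eq_cons_of_consNF_a_eq_b_cons {l l' : List SGen} (h : consNF a l = b :: l') :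
    ∃ z t, z ≠ a ∧ l' = z :: t := by
  unfold consNF at h
  split at h <;> simp only [List.cons.injEq, reduceCtorEq, false_and] at h
  · exact ⟨.x _, _, nofun, h.2.symm⟩
  · exact ⟨.y _, _, nofun, h.2.symm⟩

end SGen

open SGen

def wordAction : S →* Function.End (List SGen) :=
  PresentedMonoid.lift (M := Function.End (List SGen)) consNF fun _ _ h ↦ by cases h <;> rfl

def normalForm (s : S) : List SGen := wordAction s []

theorem wordAction_gen_mul (g : SGen) (s : S) (L : List SGen) :
    wordAction (gen g * s) L = consNF g (wordAction s L) := by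
  rw [map_mul]
  rfl

theorem normalForm_gen_mul (g : SGen) (s : S) :
    normalForm (gen g * s) = consNF g (normalForm s) :=
  wordAction_gen_mul g s []

theorem wordAction_eq_foldr (s : S) (L : List SGen) :
    wordAction s L = (normalForm s).foldr consNF L := by
  induction s using PresentedMonoid.inductionOn with | _ w
  induction w using FreeMonoid.inductionOn' with
  | one => rfl
  | of_mul g w ih =>
    rw [show PresentedMonoid.mk SRel (.of g * w) = gen g * .mk SRel w from rfl,
      normalForm_gen_mul, wordAction_gen_mul, ih, foldr_consNF_consNF]

theorem exists_normalForm_eq_of_mem_inter {f : S}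
    (hf : f ∈ rIdeal (gen .b) ∩ rIdeal (gen .a)) :
    ∃ z t, z ≠ .a ∧ normalForm f = .b :: z :: t := by
  obtain ⟨⟨u, rfl⟩, ⟨v, hv⟩⟩ := hf
  have h : consNF .a (normalForm v) = .b :: normalForm u := by
    rw [← normalForm_gen_mul, ← hv, normalForm_gen_mul]
    rfl
  obtain ⟨z, t, hz, hu⟩ := exists_eq_cons_of_consNF_a_eq_b_cons h
  exact ⟨z, t, hz, by rw [normalForm_gen_mul, hu]; rfl⟩

theorem wordAction_eq_of_normalForm_eq {f : S} {z : SGen} {t : List SGen} (hz : z ≠ .a)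
    (hf : normalForm f = .b :: z :: t) (L : List SGen) :
    wordAction f L = .b :: z :: t.foldr consNF L := by
  rw [wordAction_eq_foldr, hf, List.foldr_cons, List.foldr_cons, consNF_of_ne_a hz]
  rfl

theorem eq_x_of_gen_b_mul_gen_x_mem_rIdeal {f : S} {z : SGen} {t : List SGen} (hz : z ≠ .a)
    (hf : normalForm f = .b :: z :: t) {n : ℤ} (hn : gen .b * gen (.x n) ∈ rIdeal f) :
    z = .x n := by
  obtain ⟨u, hu⟩ := hn
  have h : [.b, .x n] = (wordAction f * wordAction u) [] := by
    rw [← map_mul, ← hu]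
    rfl
  change _ = wordAction f (wordAction u []) at h
  rw [wordAction_eq_of_normalForm_eq hz hf] at h
  simp only [List.cons.injEq] at h
  exact h.2.1.symm

theorem gen_b_mul_gen_x_mem_inter (n : ℤ) :
    gen .b * gen (.x n) ∈ rIdeal (gen .b) ∩ rIdeal (gen .a) :=
  ⟨⟨gen (.x n), rfl⟩, ⟨gen .b * gen (.x n),
    by rw [← mul_assoc]; exact (PresentedMonoid.mk_eq_mk_of_rel (SRel.xr n)).symm⟩⟩

theorem eq_of_gen_b_mul_gen_x_mem_rIdeal {f : S} (hf : f ∈ rIdeal (gen .b) ∩ rIdeal (gen .a))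
    {n m : ℤ} (hn : gen .b * gen (.x n) ∈ rIdeal f) (hm : gen .b * gen (.x m) ∈ rIdeal f) :
    n = m := by
  obtain ⟨z, t, hz, hft⟩ := exists_normalForm_eq_of_mem_inter hf
  exact SGen.x.inj <|
    (eq_x_of_gen_b_mul_gen_x_mem_rIdeal hz hft hn).symm.trans
      (eq_x_of_gen_b_mul_gen_x_mem_rIdeal hz hft hm)

/-- In `S`, the right ideal `bS ∩ aS` is not a finite union of principal right ideals;
in particular, `S` is not finitely aligned. -/
theorem S_not_finitelyAligned :
    (¬ ∃ F : Finset S, rIdeal (gen .b) ∩ rIdeal (gen .a) = ⋃ f ∈ F, rIdeal f) ∧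
    ¬ FinitelyAligned S := by
  have h : ¬ ∃ F : Finset S, rIdeal (gen .b) ∩ rIdeal (gen .a) = ⋃ f ∈ F, rIdeal f :=
    not_exists_finset_eq_biUnion_rIdeal _ gen_b_mul_gen_x_mem_inter
      fun _ hf _ _ ↦ eq_of_gen_b_mul_gen_x_mem_rIdeal hf
  exact ⟨h, fun hS ↦ h (hS _ _)⟩
end

section
/- In the monoid S, if x is one of the generators x_n or y_n (n ∈ ℤ) and y is any generator from {a, b, x_m, y_m (m ∈ ℤ)} with y ≠ x (as letters), then xS ∩ yS = ∅. -/
/-- Reduced letters: `a` and `b` merged into one. -/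
inductive HGen : Type
  | B : HGen
  | X : ℤ → HGen
  | Y : ℤ → HGen
  deriving DecidableEq

/-- The "first letter" monoid: `Option HGen` with left-absorbing multiplication. -/
instance : Monoid (Option HGen) where
  mul a b := a.orElse (fun _ => b)
  one := none
  mul_assoc a b c := by cases a <;> rfl
  one_mul a := rfl
  mul_one a := by cases a <;> rfl

theorem head_mul (a b : Option HGen) : a * b = a.orElse (fun _ => b) := rfl

/-- Reduction of letters. -/
def redLetter : SGen → Option HGen
  | .a => some .B
  | .b => some .B
  | .x n => some (.X n)
  | .y n => some (.Y n)

theorem redLetter_compat : ∀ a b : FreeMonoid SGen, SRel a b →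
    FreeMonoid.lift redLetter a = FreeMonoid.lift redLetter b := by
  intro a b h
  cases h <;> rfl

/-- The first-letter homomorphism on `S`. -/
def headHom : S →* Option HGen := PresentedMonoid.lift redLetter redLetter_compat

theorem headHom_gen_mul (g : SGen) (u : S) : headHom (gen g * u) = redLetter g := by
  rw [map_mul]
  show headHom (gen g) * headHom u = _
  have : headHom (gen g) = redLetter g := rfl
  rw [this]
  cases g <;> rfl

/-- If `x` is one of the generators `x n` or `y n` and `y` is any generator different
from `x` (as a letter), then `xS ∩ yS = ∅`. -/
theorem S_disjoint_ideals :
    ∀ x y : SGen, (∃ n : ℤ, x = SGen.x n ∨ x = SGen.y n) → x ≠ y →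
      rIdeal (gen x) ∩ rIdeal (gen y) = ∅ := by
  intro x y hx hxy
  ext m
  simp only [Set.mem_inter_iff, Set.mem_empty_iff_false, iff_false]
  rintro ⟨⟨u, rfl⟩, ⟨v, hv⟩⟩
  have h := congrArg headHom hv
  rw [headHom_gen_mul, headHom_gen_mul] at h
  obtain ⟨n, hn | hn⟩ := hx <;> subst hn <;>
    cases y <;> simp_all [redLetter]
end

section
/- In the monoid S, for every integer k ≥ 1 one has bS ∩ a^k S = bS ∩ a^k b S = ⋃_{n ∈ ℤ} b·x_n·S ∪ ⋃_{n ∈ ℤ} b·y_n·S. -/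
/-!
Prepending a letter to a word and then applying `a b xₙ → b xₙ` or `a b yₙ → b yₙ₊₁` at the front,
if possible, respects the defining relations, so `S` acts on words, and multiplying out the word
`s • []` gives back `s`. For `s = b u = a v` this word is `b` prepended to the word of `u`, and also
`a` prepended to the word of `v` and reduced; the latter starts with `b` only when the `a` was
absorbed by a prefix `b xₙ` or `b yₙ`, which puts `s` in `b xₙ S` or `b yₙ₊₁ S`. Conversely
`aᵏ b xₙ = b xₙ` and `aᵏ b yₙ₋ₖ = b yₙ`, so these ideals lie in `bS ∩ aᵏbS ⊆ bS ∩ aᵏS`.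
-/

section rIdeal

variable {M : Type*} [Monoid M]

lemma mul_mem_rIdeal (s u : M) : s * u ∈ rIdeal s := ⟨u, rfl⟩

lemma rIdeal_subset_of_mem {s t : M} (h : t ∈ rIdeal s) : rIdeal t ⊆ rIdeal s := by
  obtain ⟨v, rfl⟩ := h
  rintro _ ⟨u, rfl⟩
  exact ⟨v * u, mul_assoc s v u⟩

lemma rIdeal_mul_subset (s t : M) : rIdeal (s * t) ⊆ rIdeal s :=
  rIdeal_subset_of_mem (mul_mem_rIdeal s t)

end rIdeal

lemma gen_a_mul_gen_b_mul_gen_x (n : ℤ) :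
    gen .a * (gen .b * gen (.x n)) = gen .b * gen (.x n) := by
  have h := PresentedMonoid.mk_eq_mk_of_rel (SRel.xr n)
  simp only [map_mul, mul_assoc] at h
  exact h

lemma gen_a_mul_gen_b_mul_gen_y (n : ℤ) :
    gen .a * (gen .b * gen (.y n)) = gen .b * gen (.y (n + 1)) := by
  have h := PresentedMonoid.mk_eq_mk_of_rel (SRel.yr n)
  simp only [map_mul, mul_assoc] at h
  exact h

lemma gen_a_pow_mul_gen_b_mul_gen_x (k : ℕ) (n : ℤ) :
    gen .a ^ k * (gen .b * gen (.x n)) = gen .b * gen (.x n) := by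
  induction k with
  | zero => rw [pow_zero, one_mul]
  | succ k ih => rw [pow_succ, mul_assoc, gen_a_mul_gen_b_mul_gen_x, ih]

lemma gen_a_pow_mul_gen_b_mul_gen_y (k : ℕ) (n : ℤ) :
    gen .a ^ k * (gen .b * gen (.y n)) = gen .b * gen (.y (n + k)) := by
  induction k generalizing n with
  | zero => rw [pow_zero, one_mul, Nat.cast_zero, add_zero]
  | succ k ih =>
    rw [pow_succ', mul_assoc, ih, gen_a_mul_gen_b_mul_gen_y, Nat.cast_succ, add_assoc]

def consReduce : SGen → List SGen → List SGen
  | .a, .b :: .x n :: w => .b :: .x n :: w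
  | .a, .b :: .y n :: w => .b :: .y (n + 1) :: w
  | c, w => c :: w

lemma prod_map_gen_consReduce (c : SGen) (w : List SGen) :
    ((consReduce c w).map gen).prod = gen c * (w.map gen).prod := by
  rcases c with _ | _ | _ | _
  · rcases w with _ | ⟨_ | _ | _ | _, _ | ⟨_ | _ | n | n, w⟩⟩ <;>
      simp only [consReduce, List.map_cons, List.prod_cons, List.map_nil, List.prod_nil]
    · rw [← mul_assoc (gen .b), ← mul_assoc (gen .a), gen_a_mul_gen_b_mul_gen_x]
    · rw [← mul_assoc (gen .b), ← mul_assoc (gen .b), ← mul_assoc (gen .a),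
        gen_a_mul_gen_b_mul_gen_y]
  all_goals rfl

lemma consReduce_a_eq_b_cons {w v : List SGen} (h : consReduce .a w = .b :: v) :
    (∃ n u, w = .b :: .x n :: u ∧ v = .x n :: u) ∨
      ∃ n u, w = .b :: .y n :: u ∧ v = .y (n + 1) :: u := by
  rcases w with _ | ⟨_ | _ | _ | _, _ | ⟨_ | _ | n | n, u⟩⟩ <;>
    simp [consReduce] at h ⊢ <;> exact h.symm

def reduceAction : S →* Function.End (List SGen) :=
  PresentedMonoid.lift (M := Function.End (List SGen)) consReduce <| by
    rintro _ _ (n | n) <;> rfl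

lemma reduceAction_gen_mul (c : SGen) (s : S) (w : List SGen) :
    reduceAction (gen c * s) w = consReduce c (reduceAction s w) := by
  rw [map_mul]
  rfl

lemma prod_map_gen_reduceAction (s : S) (w : List SGen) :
    ((reduceAction s w).map gen).prod = s * (w.map gen).prod := by
  induction s using PresentedMonoid.inductionOn with
  | h v =>
    induction v using FreeMonoid.inductionOn' with
    | one => rw [map_one, map_one, one_mul]; rfl
    | of_mul c v ih =>
      rw [map_mul]
      change ((reduceAction (gen c * _) w).map gen).prod = gen c * _ * _
      rw [reduceAction_gen_mul, prod_map_gen_consReduce, ih, mul_assoc]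

lemma rIdeal_b_inter_rIdeal_a_subset :
    rIdeal (gen .b) ∩ rIdeal (gen .a) ⊆
      (⋃ n : ℤ, rIdeal (gen .b * gen (.x n))) ∪ ⋃ n : ℤ, rIdeal (gen .b * gen (.y n)) := by
  rintro s ⟨⟨u, rfl⟩, v, hv⟩
  have hnf : consReduce .a (reduceAction v []) = .b :: reduceAction u [] := by
    rw [← reduceAction_gen_mul, ← hv, reduceAction_gen_mul]
    rfl
  have hu := prod_map_gen_reduceAction u []
  simp only [List.map_nil, List.prod_nil, mul_one] at hu
  rcases consReduce_a_eq_b_cons hnf with ⟨n, w, -, hw⟩ | ⟨n, w, -, hw⟩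
  · refine Or.inl (Set.mem_iUnion.2 ⟨n, (w.map gen).prod, ?_⟩)
    rw [← hu, hw, List.map_cons, List.prod_cons, mul_assoc]
  · refine Or.inr (Set.mem_iUnion.2 ⟨n + 1, (w.map gen).prod, ?_⟩)
    rw [← hu, hw, List.map_cons, List.prod_cons, mul_assoc]

lemma iUnion_rIdeal_subset_rIdeal_b_inter_rIdeal_a_pow_mul_b (k : ℕ) :
    (⋃ n : ℤ, rIdeal (gen .b * gen (.x n))) ∪ ⋃ n : ℤ, rIdeal (gen .b * gen (.y n)) ⊆
      rIdeal (gen .b) ∩ rIdeal (gen .a ^ k * gen .b) := by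
  refine Set.union_subset (Set.iUnion_subset fun n ↦ ?_) (Set.iUnion_subset fun n ↦ ?_) <;>
    refine Set.subset_inter (rIdeal_mul_subset _ _) (rIdeal_subset_of_mem ?_)
  · refine ⟨gen (.x n), ?_⟩
    rw [mul_assoc, gen_a_pow_mul_gen_b_mul_gen_x]
  · refine ⟨gen (.y (n - k)), ?_⟩
    rw [mul_assoc, gen_a_pow_mul_gen_b_mul_gen_y, sub_add_cancel]

/-- For every `k ≥ 1`, `bS ∩ aᵏS = bS ∩ aᵏbS = ⋃ₙ b xₙ S ∪ ⋃ₙ b yₙ S`. -/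
theorem S_bS_inter_akS (k : ℕ) (hk : 1 ≤ k) :
    rIdeal (gen .b) ∩ rIdeal (gen .a ^ k) = rIdeal (gen .b) ∩ rIdeal (gen .a ^ k * gen .b) ∧
    rIdeal (gen .b) ∩ rIdeal (gen .a ^ k) =
      (⋃ n : ℤ, rIdeal (gen .b * gen (.x n))) ∪ ⋃ n : ℤ, rIdeal (gen .b * gen (.y n)) := by
  have h_ak_b : rIdeal (gen .b) ∩ rIdeal (gen .a ^ k * gen .b) ⊆
      rIdeal (gen .b) ∩ rIdeal (gen .a ^ k) :=
    Set.inter_subset_inter_right _ (rIdeal_mul_subset _ _)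
  have h_ak : rIdeal (gen .b) ∩ rIdeal (gen .a ^ k) ⊆
      (⋃ n : ℤ, rIdeal (gen .b * gen (.x n))) ∪ ⋃ n : ℤ, rIdeal (gen .b * gen (.y n)) := by
    obtain ⟨j, rfl⟩ := Nat.exists_eq_add_of_le' hk
    refine (Set.inter_subset_inter_right _ (rIdeal_subset_of_mem ?_)).trans
      rIdeal_b_inter_rIdeal_a_subset
    exact ⟨gen .a ^ j, pow_succ' _ _⟩
  have h_union := iUnion_rIdeal_subset_rIdeal_b_inter_rIdeal_a_pow_mul_b k
  exact ⟨(h_ak.trans h_union).antisymm h_ak_b, h_ak.antisymm (h_union.trans h_ak_b)⟩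
end

section
/- For every n ∈ ℤ, a word w in the free monoid on the alphabet A represents the element b·y_n of S if and only if w = a^k b y_{n−k} for some integer k ≥ 0 (where a^k b y_{n−k} denotes the word consisting of k letters a followed by the letters b and y_{n−k}). -/
def step (c : SGen) (s : List SGen) : List SGen :=
  match c, s with
  | .a, .b :: .x m :: t => .b :: .x m :: t
  | .a, .b :: .y m :: t => .b :: .y (m+1) :: t
  | c, s => c :: s

lemma step_b (s : List SGen) : step .b s = .b :: s := rfl
lemma step_x (m : ℤ) (s : List SGen) : step (.x m) s = .x m :: s := rfl
lemma step_y (m : ℤ) (s : List SGen) : step (.y m) s = .y m :: s := rfl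

lemma step_a (s : List SGen) :
    step .a s = .a :: s ∨
    (∃ m t, s = .b :: .x m :: t ∧ step .a s = s) ∨
    (∃ m t, s = .b :: .y m :: t ∧ step .a s = .b :: .y (m+1) :: t) := by
  rcases s with _ | ⟨c1, s⟩
  · exact Or.inl rfl
  rcases s with _ | ⟨c2, t⟩
  · cases c1 <;> exact Or.inl rfl
  cases c1 with
  | a => exact Or.inl rfl
  | b =>
    cases c2 with
    | a => exact Or.inl rfl
    | b => exact Or.inl rfl
    | x m => exact Or.inr (Or.inl ⟨m, t, rfl, rfl⟩)
    | y m => exact Or.inr (Or.inr ⟨m, t, rfl, rfl⟩)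
  | x m => exact Or.inl rfl
  | y m => exact Or.inl rfl

lemma step_ne_nil (c : SGen) (s : List SGen) : step c s ≠ [] := by
  cases c with
  | a =>
    rcases step_a s with h | ⟨m, t, hs, h⟩ | ⟨m, t, hs, h⟩ <;> rw [h]
    · simp
    · simp [hs]
    · simp
  | b => rw [step_b]; simp
  | x m => rw [step_x]; simp
  | y m => rw [step_y]; simp

lemma step_eq_single {c : SGen} {s : List SGen} {d : SGen}
    (h : step c s = [d]) : c = d ∧ s = [] := by
  cases c with
  | a =>
    rcases step_a s with h' | ⟨m, t, hs, h'⟩ | ⟨m, t, hs, h'⟩ <;> rw [h'] at h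
    · exact List.cons_eq_cons.mp h
    · subst hs; simp at h
    · simp at h
  | b => rw [step_b] at h; exact List.cons_eq_cons.mp h
  | x m => rw [step_x] at h; exact List.cons_eq_cons.mp h
  | y m => rw [step_y] at h; exact List.cons_eq_cons.mp h

lemma step_a_eq_by {s : List SGen} {m : ℤ}
    (h : step .a s = [.b, .y m]) : s = [.b, .y (m - 1)] := by
  rcases step_a s with h' | ⟨p, t, hs, h'⟩ | ⟨p, t, hs, h'⟩ <;> rw [h'] at h
  · simp at h
  · rw [hs] at h; simp at h
  · simp at h
    obtain ⟨hp, ht⟩ := h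
    rw [hs, ht]
    have : p = m - 1 := by omega
    rw [this]

def nf (l : List SGen) : List SGen := l.foldr step []

lemma nf_eq_nil {l : List SGen} (h : nf l = []) : l = [] := by
  cases l with
  | nil => rfl
  | cons c t => exact absurd h (step_ne_nil c _)

lemma nf_eq_single {l : List SGen} {d : SGen} (h : nf l = [d]) : l = [d] := by
  cases l with
  | nil => simp [nf] at h
  | cons c t =>
    obtain ⟨rfl, ht⟩ := step_eq_single h
    rw [nf_eq_nil ht]

lemma nf_eq_by {l : List SGen} {m : ℤ} (h : nf l = [.b, .y m]) :
    ∃ k : ℕ, l = List.replicate k .a ++ [.b, .y (m - k)] := by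
  induction l generalizing m with
  | nil => simp [nf] at h
  | cons c t ih =>
    cases c with
    | a =>
      have h2 : nf t = [.b, .y (m - 1)] := step_a_eq_by h
      obtain ⟨k, hk⟩ := ih h2
      refine ⟨k + 1, ?_⟩
      rw [List.replicate_succ, List.cons_append, hk]
      have : m - 1 - (k : ℤ) = m - ((k : ℕ) + 1 : ℕ) := by push_cast; ring
      rw [this]
    | b =>
      have h2 : SGen.b :: nf t = [.b, .y m] := h
      have h3 : nf t = [.y m] := by simpa using h2
      have h4 := nf_eq_single h3
      exact ⟨0, by simp [h4]⟩
    | x p =>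
      have h2 : SGen.x p :: nf t = [.b, .y m] := h
      simp at h2
    | y p =>
      have h2 : SGen.y p :: nf t = [.b, .y m] := h
      simp at h2

lemma con_nf {w w' : FreeMonoid SGen} (h : (conGen SRel) w w') :
    ∀ s : List SGen, w.toList.foldr step s = w'.toList.foldr step s := by
  induction h with
  | of u v huv =>
    intro s
    cases huv with
    | xr m => rfl
    | yr m => rfl
  | refl => intro s; rfl
  | symm _ ih => intro s; exact (ih s).symm
  | trans _ _ ih1 ih2 => intro s; exact (ih1 s).trans (ih2 s)
  | mul _ _ ih1 ih2 =>
    intro s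
    rename_i w1 w2 v1 v2 _ _
    show (w1 * v1).toList.foldr step s = (w2 * v2).toList.foldr step s
    rw [FreeMonoid.toList_mul, FreeMonoid.toList_mul, List.foldr_append, List.foldr_append,
      ih2 s, ih1 _]

lemma toList_pow_a (k : ℕ) : (FreeMonoid.of SGen.a ^ k).toList = List.replicate k .a := by
  induction k with
  | zero => rfl
  | succ k ih => rw [pow_succ', FreeMonoid.toList_mul, ih]; rfl

lemma rel_step (m : ℤ) :
    PresentedMonoid.mk SRel (.of .a * .of .b * .of (.y m)) =
    PresentedMonoid.mk SRel (.of .b * .of (.y (m + 1))) :=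
  Quotient.sound (ConGen.Rel.of _ _ (SRel.yr m))

/-- A word `w` in the free monoid on the alphabet represents `b·yₙ` in `S` if and only if
`w = aᵏ b y_{n-k}` for some `k ≥ 0`. -/
theorem S_words_for_by (n : ℤ) (w : FreeMonoid SGen) :
    PresentedMonoid.mk SRel w = gen .b * gen (.y n) ↔
      ∃ k : ℕ, w = FreeMonoid.of SGen.a ^ k * FreeMonoid.of SGen.b *
        FreeMonoid.of (SGen.y (n - (k : ℤ))) := by
  constructor
  · intro h
    have hc : (conGen SRel) w (FreeMonoid.of .b * FreeMonoid.of (.y n)) := by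
      have h2 : PresentedMonoid.mk SRel w =
          PresentedMonoid.mk SRel (FreeMonoid.of .b * FreeMonoid.of (.y n)) := by
        simpa [gen, PresentedMonoid.of, map_mul] using h
      exact Quotient.exact h2
    have hnf : nf w.toList = [.b, .y n] := con_nf hc []
    obtain ⟨k, hk⟩ := nf_eq_by hnf
    refine ⟨k, ?_⟩
    have htl : FreeMonoid.toList (FreeMonoid.of SGen.a ^ k * FreeMonoid.of SGen.b *
        FreeMonoid.of (SGen.y (n - (k : ℤ)))) = List.replicate k .a ++ [.b, .y (n - k)] := by
      rw [FreeMonoid.toList_mul, FreeMonoid.toList_mul, toList_pow_a]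
      simp [FreeMonoid.toList_of]
    rw [← FreeMonoid.ofList_toList w, hk, ← htl, FreeMonoid.ofList_toList]
  · rintro ⟨k, rfl⟩
    induction k generalizing n with
    | zero =>
      simp [gen, PresentedMonoid.of, map_mul]
    | succ k ih =>
      have harg : n - ((k + 1 : ℕ) : ℤ) = (n - 1) - (k : ℤ) := by push_cast; ring
      rw [harg, pow_succ', mul_assoc, mul_assoc, ← mul_assoc (FreeMonoid.of SGen.a ^ k),
        map_mul, ih (n - 1)]
      have hrel : gen .a * (gen .b * gen (.y (n-1))) = gen .b * gen (.y n) := by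
        have h1 := rel_step (n-1)
        simp only [map_mul] at h1
        have h2 : gen SGen.a * gen SGen.b * gen (SGen.y (n-1)) =
            gen SGen.b * gen (SGen.y (n-1+1)) := h1
        rw [← mul_assoc, h2, show n-1+1 = n by ring]
      rw [show PresentedMonoid.mk SRel (FreeMonoid.of SGen.a) = gen SGen.a from rfl, hrel]
end

section
/- Every constructible right ideal of the monoid S equals ∅, or sS for some s ∈ S, or ⋃_{n ∈ ℤ} s·x_n·S ∪ ⋃_{n ∈ ℤ} s·y_n·S for some s ∈ S; conversely all sets of these forms are constructible right ideals of S. -/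
/-- The constructible right ideals of a monoid `M`: the smallest family of subsets of `M`
containing `M` itself and closed under the operations `X ↦ tX` and `X ↦ t⁻¹X = {m | t·m ∈ X}`
for every `t ∈ M`. -/
inductive IsConstructible (M : Type*) [Monoid M] : Set M → Prop
  | univ : IsConstructible M Set.univ
  | mul (t : M) {X : Set M} : IsConstructible M X → IsConstructible M ((t * ·) '' X)
  | preimage (t : M) {X : Set M} : IsConstructible M X → IsConstructible M {m | t * m ∈ X}

namespace SP

abbrev W := List SGen

def actA : W → W
  | .b :: .x n :: w => .b :: .x n :: w
  | .b :: .y n :: w => .b :: .y (n+1) :: w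
  | w => .a :: w

def act : SGen → W → W
  | .a, w => actA w
  | .b, w => .b :: w
  | .x n, w => .x n :: w
  | .y n, w => .y n :: w

lemma actA_bx (n : ℤ) (r : W) : actA (.b :: .x n :: r) = .b :: .x n :: r := rfl
lemma actA_by (n : ℤ) (r : W) : actA (.b :: .y n :: r) = .b :: .y (n+1) :: r := rfl

lemma actA_cases (w : W) :
    (∃ n r, w = .b :: .x n :: r) ∨ (∃ n r, w = .b :: .y n :: r) ∨ actA w = .a :: w := by
  match w with
  | [] => right; right; rfl
  | [c] => right; right; cases c <;> rfl
  | .a :: c :: r => right; right; rfl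
  | .x k :: c :: r => right; right; rfl
  | .y k :: c :: r => right; right; rfl
  | .b :: .a :: r => right; right; rfl
  | .b :: .b :: r => right; right; rfl
  | .b :: .x n :: r => exact .inl ⟨n, r, rfl⟩
  | .b :: .y n :: r => exact .inr (.inl ⟨n, r, rfl⟩)

def unact : W → W
  | .a :: w => w
  | .b :: .x n :: r => .b :: .x n :: r
  | .b :: .y n :: r => .b :: .y (n-1) :: r
  | w => w

lemma unact_actA (w : W) : unact (actA w) = w := by
  rcases actA_cases w with ⟨n, r, rfl⟩ | ⟨n, r, rfl⟩ | h
  · rfl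
  · rw [actA_by]; show .b :: .y (n+1-1) :: r = _
    norm_num
  · rw [h]; rfl

lemma actA_inj : Function.Injective actA :=
  Function.LeftInverse.injective unact_actA

lemma act_inj (g : SGen) : Function.Injective (act g) := by
  cases g with
  | a => exact actA_inj
  | b => exact fun w w' h => by injection h
  | x n => exact fun w w' h => by injection h
  | y n => exact fun w w' h => by injection h

lemma actA_eq_b_cons {w u : W} (h : actA w = .b :: u) :
    (∃ n r, w = .b :: .x n :: r ∧ u = .x n :: r) ∨
    (∃ n r, w = .b :: .y n :: r ∧ u = .y (n+1) :: r) := by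
  rcases actA_cases w with ⟨n, r, rfl⟩ | ⟨n, r, rfl⟩ | h'
  · rw [actA_bx] at h; injection h with _ h2; exact .inl ⟨n, r, rfl, h2.symm⟩
  · rw [actA_by] at h; injection h with _ h2; exact .inr ⟨n, r, rfl, h2.symm⟩
  · rw [h'] at h; exact absurd h (by simp)

lemma actA_head (w : W) : (∃ u, actA w = .a :: u) ∨ ∃ u, actA w = .b :: u := by
  rcases actA_cases w with ⟨n, r, rfl⟩ | ⟨n, r, rfl⟩ | h
  · exact .inr ⟨_, actA_bx n r⟩
  · exact .inr ⟨_, actA_by n r⟩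
  · exact .inl ⟨w, h⟩

def fgen : SGen → Function.End W := fun g => act g

lemma frel : ∀ u v, SRel u v → FreeMonoid.lift fgen u = FreeMonoid.lift fgen v := by
  intro u v h
  cases h with
  | xr n =>
    simp only [map_mul, FreeMonoid.lift_eval_of]
    funext w; rfl
  | yr n =>
    simp only [map_mul, FreeMonoid.lift_eval_of]
    funext w; rfl

def Phi : S →* Function.End W := PresentedMonoid.lift fgen frel

def nf (s : S) : W := Phi s []

def pi (w : W) : S := PresentedMonoid.mk SRel (FreeMonoid.ofList w)

lemma pi_nil : pi [] = 1 := rfl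

lemma pi_cons (g : SGen) (w : W) : pi (g :: w) = gen g * pi w := rfl

lemma nf_one : nf (1 : S) = [] := rfl

lemma nf_gen_mul (g : SGen) (s : S) : nf (gen g * s) = act g (nf s) := by
  show Phi (gen g * s) [] = _
  rw [map_mul]
  show Phi (gen g) (Phi s []) = _
  have : Phi (gen g) = fgen g := PresentedMonoid.lift_of fgen frel
  rw [this]; rfl

lemma rel_x (n : ℤ) (q : S) :
    gen .a * (gen .b * (gen (.x n) * q)) = gen .b * (gen (.x n) * q) := by
  have h : gen .a * gen .b * gen (.x n) = gen .b * gen (.x n) :=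
    Quotient.sound (ConGen.Rel.of _ _ (SRel.xr n))
  calc gen .a * (gen .b * (gen (.x n) * q)) = gen .a * gen .b * gen (.x n) * q := by
        rw [mul_assoc, mul_assoc]
    _ = gen .b * gen (.x n) * q := by rw [h]
    _ = _ := by rw [mul_assoc]

lemma rel_y (n : ℤ) (q : S) :
    gen .a * (gen .b * (gen (.y n) * q)) = gen .b * (gen (.y (n+1)) * q) := by
  have h : gen .a * gen .b * gen (.y n) = gen .b * gen (.y (n+1)) :=
    Quotient.sound (ConGen.Rel.of _ _ (SRel.yr n))
  calc gen .a * (gen .b * (gen (.y n) * q)) = gen .a * gen .b * gen (.y n) * q := by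
        rw [mul_assoc, mul_assoc]
    _ = gen .b * gen (.y (n+1)) * q := by rw [h]
    _ = _ := by rw [mul_assoc]

lemma pi_act (g : SGen) (w : W) : pi (act g w) = gen g * pi w := by
  cases g with
  | a =>
    show pi (actA w) = _
    rcases actA_cases w with ⟨n, r, rfl⟩ | ⟨n, r, rfl⟩ | h
    · simp only [actA_bx, pi_cons]; exact (rel_x n (pi r)).symm
    · simp only [actA_by, pi_cons]; exact (rel_y n (pi r)).symm
    · rw [h, pi_cons]
  | b => exact pi_cons _ _
  | x n => exact pi_cons _ _
  | y n => exact pi_cons _ _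

lemma pi_nf (s : S) : pi (nf s) = s := by
  induction s using PresentedMonoid.inductionOn with
  | h a =>
    have : ∀ l : W, pi (nf (pi l)) = pi l := by
      intro l
      induction l with
      | nil => rw [pi_nil, nf_one, pi_nil]
      | cons g l ih => rw [pi_cons, nf_gen_mul, pi_act, ih]
    have ha : PresentedMonoid.mk SRel a = pi (FreeMonoid.toList a) := rfl
    rw [ha]; exact this _

lemma cancel_gen {g : SGen} {m m' : S} (h : gen g * m = gen g * m') : m = m' := by
  have h2 := congrArg nf h
  rw [nf_gen_mul, nf_gen_mul] at h2
  have := act_inj g h2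
  calc m = pi (nf m) := (pi_nf m).symm
    _ = pi (nf m') := by rw [this]
    _ = m' := pi_nf m'

lemma destruct (r : S) : r = 1 ∨ ∃ g r', r = gen g * r' := by
  have := pi_nf r
  cases h : nf r with
  | nil => left; rw [← this, h, pi_nil]
  | cons g w => right; exact ⟨g, pi w, by rw [← this, h, pi_cons]⟩

/-! ### head/disequality lemmas -/

lemma act_eq_cons {g : SGen} (hg : g ≠ .a) (w : W) : act g w = g :: w := by
  cases g with
  | a => exact absurd rfl hg
  | b => rfl
  | x n => rfl
  | y n => rfl

lemma ne_aux {g h : SGen} (hg : g ≠ .a) (hh : h ≠ .a) (hne : g ≠ h) (m p : S) :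
    gen g * m ≠ gen h * p := by
  intro hEq
  have h2 := congrArg nf hEq
  rw [nf_gen_mul, nf_gen_mul, act_eq_cons hg, act_eq_cons hh] at h2
  exact hne (by injection h2)

lemma ne_a_aux {g : SGen} (hg : g ≠ .a) (hgb : g ≠ .b) (m p : S) :
    gen g * m ≠ gen .a * p := by
  intro hEq
  have h2 := congrArg nf hEq
  rw [nf_gen_mul, nf_gen_mul, act_eq_cons hg] at h2
  show False
  rcases actA_head (nf p) with ⟨u, hu⟩ | ⟨u, hu⟩ <;> rw [show act SGen.a (nf p) = actA (nf p) from rfl, hu] at h2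
  · exact hg (by injection h2)
  · exact hgb (by injection h2)

/-! ### the sets -/

def Pre (g : SGen) (X : Set S) : Set S := (fun m => gen g * m) ⁻¹' X

def Un (s : S) : Set S :=
  (⋃ n : ℤ, rIdeal (s * gen (.x n))) ∪ ⋃ n : ℤ, rIdeal (s * gen (.y n))

lemma mem_rIdeal {m s : S} : m ∈ rIdeal s ↔ ∃ u, m = s * u := Iff.rfl

lemma mem_Pre {g : SGen} {X : Set S} {m : S} : m ∈ Pre g X ↔ gen g * m ∈ X := Iff.rfl

lemma mem_Un {m s : S} : m ∈ Un s ↔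
    (∃ n u, m = s * (gen (.x n) * u)) ∨ ∃ n u, m = s * (gen (.y n) * u) := by
  simp [Un, rIdeal, mul_assoc]

lemma rIdeal_one : rIdeal (1 : S) = Set.univ :=
  Set.eq_univ_of_forall fun m => ⟨m, (one_mul m).symm⟩

lemma image_rIdeal (s t : S) : (s * ·) '' rIdeal t = rIdeal (s * t) := by
  ext m
  constructor
  · rintro ⟨p, ⟨u, rfl⟩, rfl⟩; exact ⟨u, (mul_assoc s t u).symm⟩
  · rintro ⟨u, rfl⟩; exact ⟨t * u, ⟨u, rfl⟩, (mul_assoc s t u).symm⟩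

lemma image_univ_eq (s : S) : (s * ·) '' Set.univ = rIdeal s := by
  ext m; simp [rIdeal, eq_comm]

lemma image_Un (s t : S) : (s * ·) '' Un t = Un (s * t) := by
  unfold Un
  rw [Set.image_union, Set.image_iUnion, Set.image_iUnion]
  simp only [image_rIdeal, mul_assoc]

lemma Un_eq_image (s : S) : Un s = (s * ·) '' Un 1 := by
  rw [image_Un, mul_one]

/-! ### one-step preimage values -/

lemma Pre_rIdeal_one (g : SGen) : Pre g (rIdeal (1 : S)) = Set.univ := by
  rw [rIdeal_one]; rfl

lemma Pre_same (g : SGen) (t : S) : Pre g (rIdeal (gen g * t)) = rIdeal t := by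
  ext m
  constructor
  · rintro ⟨u, hu⟩
    rw [mul_assoc] at hu
    exact ⟨u, cancel_gen hu⟩
  · rintro ⟨u, rfl⟩
    exact ⟨u, by rw [mul_assoc]⟩

lemma Pre_ne {g h : SGen} (hg : g ≠ .a) (hh : h ≠ .a) (hne : g ≠ h) (t : S) :
    Pre g (rIdeal (gen h * t)) = ∅ := by
  ext m
  simp only [Set.mem_empty_iff_false, iff_false, mem_Pre, mem_rIdeal, not_exists]
  intro u hu
  rw [mul_assoc] at hu
  exact ne_aux hg hh hne m (t * u) hu

lemma Pre_xy_a {g : SGen} (hg : g ≠ .a) (hgb : g ≠ .b) (t : S) :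
    Pre g (rIdeal (gen .a * t)) = ∅ := by
  ext m
  simp only [Set.mem_empty_iff_false, iff_false, mem_Pre, mem_rIdeal, not_exists]
  intro u hu
  rw [mul_assoc] at hu
  exact ne_a_aux hg hgb m (t * u) hu

lemma Pre_a_xy {h : SGen} (hh : h ≠ .a) (hhb : h ≠ .b) (t : S) :
    Pre .a (rIdeal (gen h * t)) = ∅ := by
  ext m
  simp only [Set.mem_empty_iff_false, iff_false, mem_Pre, mem_rIdeal, not_exists]
  intro u hu
  rw [mul_assoc] at hu
  exact ne_a_aux hh hhb (t * u) m hu.symm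

lemma Pre_union (g : SGen) (X Y : Set S) : Pre g (X ∪ Y) = Pre g X ∪ Pre g Y := rfl

lemma Pre_iUnion (g : SGen) (X : ℤ → Set S) : Pre g (⋃ n, X n) = ⋃ n, Pre g (X n) := by
  simp [Pre]

lemma Un_expand (s t : S) : Un (s * t) =
    (⋃ n : ℤ, rIdeal (s * (t * gen (.x n)))) ∪ ⋃ n : ℤ, rIdeal (s * (t * gen (.y n))) := by
  simp only [Un, mul_assoc]

lemma Pre_Un_same (g : SGen) (t : S) : Pre g (Un (gen g * t)) = Un t := by
  rw [Un_expand, Pre_union, Pre_iUnion, Pre_iUnion]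
  simp only [Pre_same]
  rfl

lemma Pre_Un_ne {g h : SGen} (hg : g ≠ .a) (hh : h ≠ .a) (hne : g ≠ h) (t : S) :
    Pre g (Un (gen h * t)) = ∅ := by
  rw [Un_expand, Pre_union, Pre_iUnion, Pre_iUnion]
  simp [Pre_ne hg hh hne]

lemma Pre_Un_xy_a {g : SGen} (hg : g ≠ .a) (hgb : g ≠ .b) (t : S) :
    Pre g (Un (gen .a * t)) = ∅ := by
  rw [Un_expand, Pre_union, Pre_iUnion, Pre_iUnion]
  simp [Pre_xy_a hg hgb]

lemma Pre_Un_a_xy {h : SGen} (hh : h ≠ .a) (hhb : h ≠ .b) (t : S) :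
    Pre .a (Un (gen h * t)) = ∅ := by
  rw [Un_expand, Pre_union, Pre_iUnion, Pre_iUnion]
  simp [Pre_a_xy hh hhb]

lemma Pre_x_Un_one (n : ℤ) : Pre (.x n) (Un 1) = Set.univ := by
  ext m
  simp only [Set.mem_univ, iff_true, mem_Pre, mem_Un]
  exact .inl ⟨n, m, by rw [one_mul]⟩

lemma Pre_y_Un_one (n : ℤ) : Pre (.y n) (Un 1) = Set.univ := by
  ext m
  simp only [Set.mem_univ, iff_true, mem_Pre, mem_Un]
  exact .inr ⟨n, m, by rw [one_mul]⟩

lemma Pre_b_Un_one : Pre .b (Un 1) = ∅ := by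
  ext m
  simp only [Set.mem_empty_iff_false, iff_false, mem_Pre, mem_Un, one_mul]
  rintro (⟨n, u, hu⟩ | ⟨n, u, hu⟩)
  · exact ne_aux (by simp) (by simp) (by simp) m u hu
  · exact ne_aux (by simp) (by simp) (by simp) m u hu

lemma Pre_a_Un_one : Pre .a (Un 1) = ∅ := by
  ext m
  simp only [Set.mem_empty_iff_false, iff_false, mem_Pre, mem_Un, one_mul]
  rintro (⟨n, u, hu⟩ | ⟨n, u, hu⟩)
  · exact ne_a_aux (by simp) (by simp) u m hu.symm
  · exact ne_a_aux (by simp) (by simp) u m hu.symm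

/-! ### the key inversion lemmas -/

lemma hb_iff {m p : S} : gen .b * m = gen .a * p ↔
    ∃ n m', (m = gen (.x n) * m' ∧ p = gen .b * (gen (.x n) * m')) ∨
            (m = gen (.y (n+1)) * m' ∧ p = gen .b * (gen (.y n) * m')) := by
  constructor
  · intro h
    have h2 := congrArg nf h
    rw [nf_gen_mul, nf_gen_mul, act_eq_cons (by simp)] at h2
    rcases actA_eq_b_cons h2.symm with ⟨n, r, hp, hm⟩ | ⟨n, r, hp, hm⟩
    · refine ⟨n, pi r, .inl ⟨?_, ?_⟩⟩
      · rw [← pi_nf m, hm, pi_cons]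
      · rw [← pi_nf p, hp, pi_cons, pi_cons]
    · refine ⟨n, pi r, .inr ⟨?_, ?_⟩⟩
      · rw [← pi_nf m, hm, pi_cons]
      · rw [← pi_nf p, hp, pi_cons, pi_cons]
  · rintro ⟨n, m', ⟨rfl, rfl⟩ | ⟨rfl, rfl⟩⟩
    · exact (rel_x n m').symm
    · exact (rel_y n m').symm

lemma ha_iff {m p : S} : gen .a * m = gen .b * p ↔
    ∃ n m', (m = gen .b * (gen (.x n) * m') ∧ p = gen (.x n) * m') ∨
            (m = gen .b * (gen (.y n) * m') ∧ p = gen (.y (n+1)) * m') := by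
  constructor
  · intro h
    have h2 := congrArg nf h
    rw [nf_gen_mul, nf_gen_mul, act_eq_cons (show SGen.b ≠ .a by simp)] at h2
    rcases actA_eq_b_cons (w := nf m) h2 with ⟨n, r, hm, hp⟩ | ⟨n, r, hm, hp⟩
    · refine ⟨n, pi r, .inl ⟨?_, ?_⟩⟩
      · rw [← pi_nf m, hm, pi_cons, pi_cons]
      · rw [← pi_nf p, hp, pi_cons]
    · refine ⟨n, pi r, .inr ⟨?_, ?_⟩⟩
      · rw [← pi_nf m, hm, pi_cons, pi_cons]
      · rw [← pi_nf p, hp, pi_cons]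
  · rintro ⟨n, m', ⟨rfl, rfl⟩ | ⟨rfl, rfl⟩⟩
    · exact rel_x n m'
    · exact rel_y n m'

lemma hb_gen {m : S} (Y : Set S) : m ∈ Pre .b ((gen .a * ·) '' Y) ↔
    (∃ n m', m = gen (.x n) * m' ∧ gen .b * (gen (.x n) * m') ∈ Y) ∨
    (∃ n m', m = gen (.y (n+1)) * m' ∧ gen .b * (gen (.y n) * m') ∈ Y) := by
  constructor
  · rintro ⟨p, hp, hEq⟩
    rcases hb_iff.mp hEq.symm with ⟨n, m', ⟨h1, h2⟩ | ⟨h1, h2⟩⟩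
    · exact .inl ⟨n, m', h1, h2 ▸ hp⟩
    · exact .inr ⟨n, m', h1, h2 ▸ hp⟩
  · rintro (⟨n, m', rfl, hY⟩ | ⟨n, m', rfl, hY⟩)
    · exact ⟨_, hY, (hb_iff.mpr ⟨n, m', .inl ⟨rfl, rfl⟩⟩).symm⟩
    · exact ⟨_, hY, (hb_iff.mpr ⟨n, m', .inr ⟨rfl, rfl⟩⟩).symm⟩

lemma ha_gen {m : S} (Y : Set S) : m ∈ Pre .a ((gen .b * ·) '' Y) ↔
    (∃ n m', m = gen .b * (gen (.x n) * m') ∧ gen (.x n) * m' ∈ Y) ∨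
    (∃ n m', m = gen .b * (gen (.y n) * m') ∧ gen (.y (n+1)) * m' ∈ Y) := by
  constructor
  · rintro ⟨p, hp, hEq⟩
    rcases ha_iff.mp hEq.symm with ⟨n, m', ⟨h1, h2⟩ | ⟨h1, h2⟩⟩
    · exact .inl ⟨n, m', h1, h2 ▸ hp⟩
    · exact .inr ⟨n, m', h1, h2 ▸ hp⟩
  · rintro (⟨n, m', rfl, hY⟩ | ⟨n, m', rfl, hY⟩)
    · exact ⟨_, hY, (ha_iff.mpr ⟨n, m', .inl ⟨rfl, rfl⟩⟩).symm⟩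
    · exact ⟨_, hY, (ha_iff.mpr ⟨n, m', .inr ⟨rfl, rfl⟩⟩).symm⟩

/-! ### membership helpers -/

lemma x_rIdeal_x {n k : ℤ} {m' t' : S} :
    gen (.x n) * m' ∈ rIdeal (gen (.x k) * t') ↔ n = k ∧ m' ∈ rIdeal t' := by
  constructor
  · rintro ⟨u, hu⟩
    rw [mul_assoc] at hu
    rcases eq_or_ne n k with rfl | hne
    · exact ⟨rfl, u, cancel_gen hu⟩
    · exact absurd hu (ne_aux (by simp) (by simp) (fun hc => hne (by injection hc)) _ _)
  · rintro ⟨rfl, u, rfl⟩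
    exact ⟨u, by rw [mul_assoc]⟩

lemma y_rIdeal_y {n k : ℤ} {m' t' : S} :
    gen (.y n) * m' ∈ rIdeal (gen (.y k) * t') ↔ n = k ∧ m' ∈ rIdeal t' := by
  constructor
  · rintro ⟨u, hu⟩
    rw [mul_assoc] at hu
    rcases eq_or_ne n k with rfl | hne
    · exact ⟨rfl, u, cancel_gen hu⟩
    · exact absurd hu (ne_aux (by simp) (by simp) (fun hc => hne (by injection hc)) _ _)
  · rintro ⟨rfl, u, rfl⟩
    exact ⟨u, by rw [mul_assoc]⟩

lemma x_Un_x {n k : ℤ} {m' t' : S} :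
    gen (.x n) * m' ∈ Un (gen (.x k) * t') ↔ n = k ∧ m' ∈ Un t' := by
  constructor
  · intro h
    rcases eq_or_ne n k with rfl | hne
    · refine ⟨rfl, ?_⟩
      have : m' ∈ Pre (.x n) (Un (gen (.x n) * t')) := h
      rwa [Pre_Un_same] at this
    · have : m' ∈ Pre (.x n) (Un (gen (.x k) * t')) := h
      rw [Pre_Un_ne (by simp) (by simp) (fun hc => hne (by injection hc))] at this
      exact this.elim
  · rintro ⟨rfl, hm⟩
    have : m' ∈ Pre (.x n) (Un (gen (.x n) * t')) := by rwa [Pre_Un_same]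
    exact this

lemma y_Un_y {n k : ℤ} {m' t' : S} :
    gen (.y n) * m' ∈ Un (gen (.y k) * t') ↔ n = k ∧ m' ∈ Un t' := by
  constructor
  · intro h
    rcases eq_or_ne n k with rfl | hne
    · refine ⟨rfl, ?_⟩
      have : m' ∈ Pre (.y n) (Un (gen (.y n) * t')) := h
      rwa [Pre_Un_same] at this
    · have : m' ∈ Pre (.y n) (Un (gen (.y k) * t')) := h
      rw [Pre_Un_ne (by simp) (by simp) (fun hc => hne (by injection hc))] at this
      exact this.elim
  · rintro ⟨rfl, hm⟩
    have : m' ∈ Pre (.y n) (Un (gen (.y n) * t')) := by rwa [Pre_Un_same]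
    exact this

/-! ### Good and the finishing lemmas -/

def Good (X : Set S) : Prop := X = ∅ ∨ (∃ s, X = rIdeal s) ∨ ∃ s, X = Un s

def HBset (B : Set S) : Set S :=
  {m | (∃ n m', m = gen (.x n) * m' ∧ gen (.x n) * m' ∈ B) ∨
       ∃ n m', m = gen (.y (n+1)) * m' ∧ gen (.y n) * m' ∈ B}

def HAset (Y : Set S) : Set S :=
  {m | (∃ n m', m = gen .b * (gen (.x n) * m') ∧ gen (.x n) * m' ∈ Y) ∨
       ∃ n m', m = gen .b * (gen (.y n) * m') ∧ gen (.y (n+1)) * m' ∈ Y}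

lemma Pre_b_a (X : Set S) : Pre .b ((gen .a * ·) '' X) = HBset (Pre .b X) :=
  Set.ext fun _ => hb_gen X

lemma Pre_a_b (X : Set S) : Pre .a ((gen .b * ·) '' X) = HAset X :=
  Set.ext fun _ => ha_gen X

lemma hb_finish {B : Set S} (hB : B = ∅ ∨ (∃ s, B = rIdeal s) ∨ ∃ s, B = Un s) :
    Good (HBset B) := by
  rcases hB with rfl | ⟨r, rfl⟩ | ⟨r, rfl⟩
  · left; ext m; simp [HBset]
  · -- B = rIdeal r
    rcases destruct r with rfl | ⟨h', r', rfl⟩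
    · -- r = 1
      right; right; refine ⟨1, ?_⟩
      ext m
      constructor
      · rintro (⟨n, m', rfl, _⟩ | ⟨n, m', rfl, _⟩)
        · exact mem_Un.mpr (.inl ⟨n, m', (one_mul _).symm⟩)
        · exact mem_Un.mpr (.inr ⟨n + 1, m', (one_mul _).symm⟩)
      · intro hm
        rcases mem_Un.mp hm with ⟨n, u, h⟩ | ⟨n, u, h⟩
        · rw [one_mul] at h
          exact .inl ⟨n, u, h, gen (.x n) * u, (one_mul _).symm⟩
        · rw [one_mul] at h
          refine .inr ⟨n - 1, u, ?_, gen (.y (n - 1)) * u, (one_mul _).symm⟩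
          rw [show n - 1 + 1 = n by ring]; exact h
    · cases h' with
      | a =>
        left; ext m
        simp only [HBset, Set.mem_setOf_eq, Set.mem_empty_iff_false, iff_false, not_or]
        constructor
        · rintro ⟨n, m', rfl, hc⟩
          have : m' ∈ Pre (.x n) (rIdeal (gen .a * r')) := hc
          rw [Pre_xy_a (by simp) (by simp)] at this; exact this
        · rintro ⟨n, m', rfl, hc⟩
          have : m' ∈ Pre (.y n) (rIdeal (gen .a * r')) := hc
          rw [Pre_xy_a (by simp) (by simp)] at this; exact this
      | b =>
        left; ext m
        simp only [HBset, Set.mem_setOf_eq, Set.mem_empty_iff_false, iff_false, not_or]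
        constructor
        · rintro ⟨n, m', rfl, hc⟩
          have : m' ∈ Pre (.x n) (rIdeal (gen .b * r')) := hc
          rw [Pre_ne (by simp) (by simp) (by simp)] at this; exact this
        · rintro ⟨n, m', rfl, hc⟩
          have : m' ∈ Pre (.y n) (rIdeal (gen .b * r')) := hc
          rw [Pre_ne (by simp) (by simp) (by simp)] at this; exact this
      | x k =>
        right; left; refine ⟨gen (.x k) * r', ?_⟩
        ext m
        constructor
        · rintro (⟨n, m', rfl, hc⟩ | ⟨n, m', rfl, hc⟩)
          · exact hc
          · have : m' ∈ Pre (.y n) (rIdeal (gen (.x k) * r')) := hc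
            rw [Pre_ne (by simp) (by simp) (by simp)] at this; exact this.elim
        · rintro ⟨u, rfl⟩
          exact .inl ⟨k, r' * u, by rw [mul_assoc], u, by rw [mul_assoc]⟩
      | y k =>
        right; left; refine ⟨gen (.y (k + 1)) * r', ?_⟩
        ext m
        constructor
        · rintro (⟨n, m', rfl, hc⟩ | ⟨n, m', rfl, hc⟩)
          · have : m' ∈ Pre (.x n) (rIdeal (gen (.y k) * r')) := hc
            rw [Pre_ne (by simp) (by simp) (by simp)] at this; exact this.elim
          · obtain ⟨rfl, u, rfl⟩ := y_rIdeal_y.mp hc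
            exact ⟨u, by rw [mul_assoc]⟩
        · rintro ⟨u, rfl⟩
          refine .inr ⟨k, r' * u, by rw [mul_assoc], ?_⟩
          exact y_rIdeal_y.mpr ⟨rfl, u, rfl⟩
  · -- B = Un r
    rcases destruct r with rfl | ⟨h', r', rfl⟩
    · right; right; refine ⟨1, ?_⟩
      ext m
      constructor
      · rintro (⟨n, m', rfl, _⟩ | ⟨n, m', rfl, _⟩)
        · exact mem_Un.mpr (.inl ⟨n, m', (one_mul _).symm⟩)
        · exact mem_Un.mpr (.inr ⟨n + 1, m', (one_mul _).symm⟩)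
      · intro hm
        rcases mem_Un.mp hm with ⟨n, u, h⟩ | ⟨n, u, h⟩
        · rw [one_mul] at h
          exact .inl ⟨n, u, h, mem_Un.mpr (.inl ⟨n, u, (one_mul _).symm⟩)⟩
        · rw [one_mul] at h
          refine .inr ⟨n - 1, u, ?_, mem_Un.mpr (.inr ⟨n - 1, u, (one_mul _).symm⟩)⟩
          rw [show n - 1 + 1 = n by ring]; exact h
    · cases h' with
      | a =>
        left; ext m
        simp only [HBset, Set.mem_setOf_eq, Set.mem_empty_iff_false, iff_false, not_or]
        constructor
        · rintro ⟨n, m', rfl, hc⟩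
          have : m' ∈ Pre (.x n) (Un (gen .a * r')) := hc
          rw [Pre_Un_xy_a (by simp) (by simp)] at this; exact this
        · rintro ⟨n, m', rfl, hc⟩
          have : m' ∈ Pre (.y n) (Un (gen .a * r')) := hc
          rw [Pre_Un_xy_a (by simp) (by simp)] at this; exact this
      | b =>
        left; ext m
        simp only [HBset, Set.mem_setOf_eq, Set.mem_empty_iff_false, iff_false, not_or]
        constructor
        · rintro ⟨n, m', rfl, hc⟩
          have : m' ∈ Pre (.x n) (Un (gen .b * r')) := hc
          rw [Pre_Un_ne (by simp) (by simp) (by simp)] at this; exact this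
        · rintro ⟨n, m', rfl, hc⟩
          have : m' ∈ Pre (.y n) (Un (gen .b * r')) := hc
          rw [Pre_Un_ne (by simp) (by simp) (by simp)] at this; exact this
      | x k =>
        right; right; refine ⟨gen (.x k) * r', ?_⟩
        ext m
        constructor
        · rintro (⟨n, m', rfl, hc⟩ | ⟨n, m', rfl, hc⟩)
          · exact hc
          · have : m' ∈ Pre (.y n) (Un (gen (.x k) * r')) := hc
            rw [Pre_Un_ne (by simp) (by simp) (by simp)] at this; exact this.elim
        · intro hm
          rcases mem_Un.mp hm with ⟨n, u, h⟩ | ⟨n, u, h⟩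
          · rw [mul_assoc] at h
            exact .inl ⟨k, r' * (gen (.x n) * u), h, h ▸ hm⟩
          · rw [mul_assoc] at h
            exact .inl ⟨k, r' * (gen (.y n) * u), h, h ▸ hm⟩
      | y k =>
        right; right; refine ⟨gen (.y (k + 1)) * r', ?_⟩
        ext m
        constructor
        · rintro (⟨n, m', rfl, hc⟩ | ⟨n, m', rfl, hc⟩)
          · have : m' ∈ Pre (.x n) (Un (gen (.y k) * r')) := hc
            rw [Pre_Un_ne (by simp) (by simp) (by simp)] at this; exact this.elim
          · obtain ⟨rfl, hm'⟩ := y_Un_y.mp hc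
            exact y_Un_y.mpr ⟨rfl, hm'⟩
        · intro hm
          rcases mem_Un.mp hm with ⟨n, u, h⟩ | ⟨n, u, h⟩
          · rw [mul_assoc] at h
            exact .inr ⟨k, r' * (gen (.x n) * u), h,
              y_Un_y.mpr ⟨rfl, mem_Un.mpr (.inl ⟨n, u, rfl⟩)⟩⟩
          · rw [mul_assoc] at h
            exact .inr ⟨k, r' * (gen (.y n) * u), h,
              y_Un_y.mpr ⟨rfl, mem_Un.mpr (.inr ⟨n, u, rfl⟩)⟩⟩

lemma ha_finish_rIdeal (t : S) : Good (HAset (rIdeal t)) := by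
  rcases destruct t with rfl | ⟨h', t', rfl⟩
  · right; right; refine ⟨gen .b, ?_⟩
    ext m
    constructor
    · rintro (⟨n, m', rfl, _⟩ | ⟨n, m', rfl, _⟩)
      · exact mem_Un.mpr (.inl ⟨n, m', rfl⟩)
      · exact mem_Un.mpr (.inr ⟨n, m', rfl⟩)
    · intro hm
      rcases mem_Un.mp hm with ⟨n, u, h⟩ | ⟨n, u, h⟩
      · exact .inl ⟨n, u, h, gen (.x n) * u, (one_mul _).symm⟩
      · exact .inr ⟨n, u, h, gen (.y (n+1)) * u, (one_mul _).symm⟩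
  · cases h' with
    | a =>
      left; ext m
      simp only [HAset, Set.mem_setOf_eq, Set.mem_empty_iff_false, iff_false, not_or]
      constructor
      · rintro ⟨n, m', rfl, hc⟩
        have : m' ∈ Pre (.x n) (rIdeal (gen .a * t')) := hc
        rw [Pre_xy_a (by simp) (by simp)] at this; exact this
      · rintro ⟨n, m', rfl, hc⟩
        have : m' ∈ Pre (.y (n+1)) (rIdeal (gen .a * t')) := hc
        rw [Pre_xy_a (by simp) (by simp)] at this; exact this
    | b =>
      left; ext m
      simp only [HAset, Set.mem_setOf_eq, Set.mem_empty_iff_false, iff_false, not_or]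
      constructor
      · rintro ⟨n, m', rfl, hc⟩
        have : m' ∈ Pre (.x n) (rIdeal (gen .b * t')) := hc
        rw [Pre_ne (by simp) (by simp) (by simp)] at this; exact this
      · rintro ⟨n, m', rfl, hc⟩
        have : m' ∈ Pre (.y (n+1)) (rIdeal (gen .b * t')) := hc
        rw [Pre_ne (by simp) (by simp) (by simp)] at this; exact this
    | x k =>
      right; left; refine ⟨gen .b * (gen (.x k) * t'), ?_⟩
      ext m
      constructor
      · rintro (⟨n, m', rfl, hc⟩ | ⟨n, m', rfl, hc⟩)
        · obtain ⟨rfl, u, rfl⟩ := x_rIdeal_x.mp hc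
          exact ⟨u, by simp only [mul_assoc]⟩
        · have : m' ∈ Pre (.y (n+1)) (rIdeal (gen (.x k) * t')) := hc
          rw [Pre_ne (by simp) (by simp) (by simp)] at this; exact this.elim
      · rintro ⟨u, rfl⟩
        exact .inl ⟨k, t' * u, by simp only [mul_assoc], x_rIdeal_x.mpr ⟨rfl, u, rfl⟩⟩
    | y k =>
      right; left; refine ⟨gen .b * (gen (.y (k-1)) * t'), ?_⟩
      ext m
      constructor
      · rintro (⟨n, m', rfl, hc⟩ | ⟨n, m', rfl, hc⟩)
        · have : m' ∈ Pre (.x n) (rIdeal (gen (.y k) * t')) := hc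
          rw [Pre_ne (by simp) (by simp) (by simp)] at this; exact this.elim
        · obtain ⟨hnk, u, rfl⟩ := y_rIdeal_y.mp hc
          have e : gen (SGen.y (k - 1)) = gen (.y n) := by rw [show k - 1 = n by omega]
          rw [e]
          exact ⟨u, by simp only [mul_assoc]⟩
      · rintro ⟨u, rfl⟩
        exact .inr ⟨k - 1, t' * u, by simp only [mul_assoc],
          y_rIdeal_y.mpr ⟨by ring, u, rfl⟩⟩

lemma ha_finish_Un (t : S) : Good (HAset (Un t)) := by
  rcases destruct t with rfl | ⟨h', t', rfl⟩
  · right; right; refine ⟨gen .b, ?_⟩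
    ext m
    constructor
    · rintro (⟨n, m', rfl, _⟩ | ⟨n, m', rfl, _⟩)
      · exact mem_Un.mpr (.inl ⟨n, m', rfl⟩)
      · exact mem_Un.mpr (.inr ⟨n, m', rfl⟩)
    · intro hm
      rcases mem_Un.mp hm with ⟨n, u, h⟩ | ⟨n, u, h⟩
      · exact .inl ⟨n, u, h, mem_Un.mpr (.inl ⟨n, u, (one_mul _).symm⟩)⟩
      · exact .inr ⟨n, u, h, mem_Un.mpr (.inr ⟨n+1, u, (one_mul _).symm⟩)⟩
  · cases h' with
    | a =>
      left; ext m
      simp only [HAset, Set.mem_setOf_eq, Set.mem_empty_iff_false, iff_false, not_or]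
      constructor
      · rintro ⟨n, m', rfl, hc⟩
        have : m' ∈ Pre (.x n) (Un (gen .a * t')) := hc
        rw [Pre_Un_xy_a (by simp) (by simp)] at this; exact this
      · rintro ⟨n, m', rfl, hc⟩
        have : m' ∈ Pre (.y (n+1)) (Un (gen .a * t')) := hc
        rw [Pre_Un_xy_a (by simp) (by simp)] at this; exact this
    | b =>
      left; ext m
      simp only [HAset, Set.mem_setOf_eq, Set.mem_empty_iff_false, iff_false, not_or]
      constructor
      · rintro ⟨n, m', rfl, hc⟩
        have : m' ∈ Pre (.x n) (Un (gen .b * t')) := hc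
        rw [Pre_Un_ne (by simp) (by simp) (by simp)] at this; exact this
      · rintro ⟨n, m', rfl, hc⟩
        have : m' ∈ Pre (.y (n+1)) (Un (gen .b * t')) := hc
        rw [Pre_Un_ne (by simp) (by simp) (by simp)] at this; exact this
    | x k =>
      right; right; refine ⟨gen .b * (gen (.x k) * t'), ?_⟩
      ext m
      constructor
      · rintro (⟨n, m', rfl, hc⟩ | ⟨n, m', rfl, hc⟩)
        · obtain ⟨rfl, hm'⟩ := x_Un_x.mp hc
          rcases mem_Un.mp hm' with ⟨j, u, h⟩ | ⟨j, u, h⟩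
          · exact mem_Un.mpr (.inl ⟨j, u, by rw [h]; simp only [mul_assoc]⟩)
          · exact mem_Un.mpr (.inr ⟨j, u, by rw [h]; simp only [mul_assoc]⟩)
        · have : m' ∈ Pre (.y (n+1)) (Un (gen (.x k) * t')) := hc
          rw [Pre_Un_ne (by simp) (by simp) (by simp)] at this; exact this.elim
      · intro hm
        rcases mem_Un.mp hm with ⟨n, u, h⟩ | ⟨n, u, h⟩
        · simp only [mul_assoc] at h
          exact .inl ⟨k, t' * (gen (.x n) * u), h,
            x_Un_x.mpr ⟨rfl, mem_Un.mpr (.inl ⟨n, u, rfl⟩)⟩⟩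
        · simp only [mul_assoc] at h
          exact .inl ⟨k, t' * (gen (.y n) * u), h,
            x_Un_x.mpr ⟨rfl, mem_Un.mpr (.inr ⟨n, u, rfl⟩)⟩⟩
    | y k =>
      right; right; refine ⟨gen .b * (gen (.y (k-1)) * t'), ?_⟩
      ext m
      constructor
      · rintro (⟨n, m', rfl, hc⟩ | ⟨n, m', rfl, hc⟩)
        · have : m' ∈ Pre (.x n) (Un (gen (.y k) * t')) := hc
          rw [Pre_Un_ne (by simp) (by simp) (by simp)] at this; exact this.elim
        · obtain ⟨hnk, hm'⟩ := y_Un_y.mp hc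
          have e : gen (SGen.y n) = gen (.y (k-1)) := by rw [show n = k - 1 by omega]
          rw [e]
          rcases mem_Un.mp hm' with ⟨j, u, h⟩ | ⟨j, u, h⟩
          · exact mem_Un.mpr (.inl ⟨j, u, by rw [h]; simp only [mul_assoc]⟩)
          · exact mem_Un.mpr (.inr ⟨j, u, by rw [h]; simp only [mul_assoc]⟩)
      · intro hm
        rcases mem_Un.mp hm with ⟨n, u, h⟩ | ⟨n, u, h⟩
        · simp only [mul_assoc] at h
          exact .inr ⟨k - 1, t' * (gen (.x n) * u), h,
            y_Un_y.mpr ⟨by ring, mem_Un.mpr (.inl ⟨n, u, rfl⟩)⟩⟩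
        · simp only [mul_assoc] at h
          exact .inr ⟨k - 1, t' * (gen (.y n) * u), h,
            y_Un_y.mpr ⟨by ring, mem_Un.mpr (.inr ⟨n, u, rfl⟩)⟩⟩

lemma hb_finish' {B : Set S} (hB : Good B) : Good (HBset B) := hb_finish hB

lemma main (w : W) : ∀ g : SGen, Good (Pre g (rIdeal (pi w))) ∧ Good (Pre g (Un (pi w))) := by
  induction w with
  | nil =>
    intro g
    rw [pi_nil]
    constructor
    · rw [Pre_rIdeal_one]; exact .inr (.inl ⟨1, rIdeal_one.symm⟩)
    · cases g with
      | a => rw [Pre_a_Un_one]; exact .inl rfl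
      | b => rw [Pre_b_Un_one]; exact .inl rfl
      | x n => rw [Pre_x_Un_one]; exact .inr (.inl ⟨1, rIdeal_one.symm⟩)
      | y n => rw [Pre_y_Un_one]; exact .inr (.inl ⟨1, rIdeal_one.symm⟩)
  | cons h w ih =>
    intro g
    rw [pi_cons]
    cases h with
    | a =>
      cases g with
      | a => exact ⟨.inr (.inl ⟨pi w, Pre_same _ _⟩), .inr (.inr ⟨pi w, Pre_Un_same _ _⟩)⟩
      | b =>
        constructor
        · rw [show rIdeal (gen .a * pi w) = (gen .a * ·) '' rIdeal (pi w) from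
            (image_rIdeal _ _).symm, Pre_b_a]
          exact hb_finish' (ih .b).1
        · rw [show Un (gen .a * pi w) = (gen .a * ·) '' Un (pi w) from
            (image_Un _ _).symm, Pre_b_a]
          exact hb_finish' (ih .b).2
      | x n =>
        exact ⟨.inl (Pre_xy_a (by simp) (by simp) _), .inl (Pre_Un_xy_a (by simp) (by simp) _)⟩
      | y n =>
        exact ⟨.inl (Pre_xy_a (by simp) (by simp) _), .inl (Pre_Un_xy_a (by simp) (by simp) _)⟩
    | b =>
      cases g with
      | a =>
        constructor
        · rw [show rIdeal (gen .b * pi w) = (gen .b * ·) '' rIdeal (pi w) from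
            (image_rIdeal _ _).symm, Pre_a_b]
          exact ha_finish_rIdeal (pi w)
        · rw [show Un (gen .b * pi w) = (gen .b * ·) '' Un (pi w) from
            (image_Un _ _).symm, Pre_a_b]
          exact ha_finish_Un (pi w)
      | b => exact ⟨.inr (.inl ⟨pi w, Pre_same _ _⟩), .inr (.inr ⟨pi w, Pre_Un_same _ _⟩)⟩
      | x n =>
        exact ⟨.inl (Pre_ne (by simp) (by simp) (by simp) _),
               .inl (Pre_Un_ne (by simp) (by simp) (by simp) _)⟩
      | y n =>
        exact ⟨.inl (Pre_ne (by simp) (by simp) (by simp) _),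
               .inl (Pre_Un_ne (by simp) (by simp) (by simp) _)⟩
    | x k =>
      cases g with
      | a => exact ⟨.inl (Pre_a_xy (by simp) (by simp) _), .inl (Pre_Un_a_xy (by simp) (by simp) _)⟩
      | b =>
        exact ⟨.inl (Pre_ne (by simp) (by simp) (by simp) _),
               .inl (Pre_Un_ne (by simp) (by simp) (by simp) _)⟩
      | x n =>
        rcases eq_or_ne n k with rfl | hne
        · exact ⟨.inr (.inl ⟨pi w, Pre_same _ _⟩), .inr (.inr ⟨pi w, Pre_Un_same _ _⟩)⟩
        · exact ⟨.inl (Pre_ne (by simp) (by simp) (fun hc => hne (by injection hc)) _),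
                 .inl (Pre_Un_ne (by simp) (by simp) (fun hc => hne (by injection hc)) _)⟩
      | y n =>
        exact ⟨.inl (Pre_ne (by simp) (by simp) (by simp) _),
               .inl (Pre_Un_ne (by simp) (by simp) (by simp) _)⟩
    | y k =>
      cases g with
      | a => exact ⟨.inl (Pre_a_xy (by simp) (by simp) _), .inl (Pre_Un_a_xy (by simp) (by simp) _)⟩
      | b =>
        exact ⟨.inl (Pre_ne (by simp) (by simp) (by simp) _),
               .inl (Pre_Un_ne (by simp) (by simp) (by simp) _)⟩
      | x n =>
        exact ⟨.inl (Pre_ne (by simp) (by simp) (by simp) _),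
               .inl (Pre_Un_ne (by simp) (by simp) (by simp) _)⟩
      | y n =>
        rcases eq_or_ne n k with rfl | hne
        · exact ⟨.inr (.inl ⟨pi w, Pre_same _ _⟩), .inr (.inr ⟨pi w, Pre_Un_same _ _⟩)⟩
        · exact ⟨.inl (Pre_ne (by simp) (by simp) (fun hc => hne (by injection hc)) _),
                 .inl (Pre_Un_ne (by simp) (by simp) (fun hc => hne (by injection hc)) _)⟩

lemma good_pre (g : SGen) {X : Set S} (h : Good X) : Good (Pre g X) := by
  rcases h with rfl | ⟨s, rfl⟩ | ⟨s, rfl⟩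
  · left; rfl
  · have := (main (nf s) g).1; rwa [pi_nf] at this
  · have := (main (nf s) g).2; rwa [pi_nf] at this

lemma good_pre_list : ∀ (l : W) (X : Set S), Good X → Good {m | pi l * m ∈ X} := by
  intro l
  induction l with
  | nil =>
    intro X hX
    have e : {m | pi [] * m ∈ X} = X := by
      ext m; rw [Set.mem_setOf_eq, pi_nil, one_mul]
    rw [e]; exact hX
  | cons g l ihl =>
    intro X hX
    have e : {m | pi (g :: l) * m ∈ X} = {m | pi l * m ∈ Pre g X} := by
      ext m; rw [Set.mem_setOf_eq, Set.mem_setOf_eq, pi_cons, mul_assoc]; rfl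
    rw [e]; exact ihl _ (good_pre g hX)

lemma good_pre_mul (t : S) {X : Set S} (h : Good X) : Good {m | t * m ∈ X} := by
  induction t using PresentedMonoid.inductionOn with
  | h w =>
    have e : PresentedMonoid.mk SRel w = pi (FreeMonoid.toList w) := rfl
    rw [e]
    exact good_pre_list _ X h

lemma forward {X : Set S} (h : IsConstructible S X) : Good X := by
  induction h with
  | univ => exact .inr (.inl ⟨1, rIdeal_one.symm⟩)
  | mul t _ ih =>
    rcases ih with rfl | ⟨s, rfl⟩ | ⟨s, rfl⟩
    · left; simp
    · exact .inr (.inl ⟨t * s, image_rIdeal t s⟩)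
    · exact .inr (.inr ⟨t * s, image_Un t s⟩)
  | preimage t _ ih => exact good_pre_mul t ih

lemma backward {X : Set S} (h : Good X) : IsConstructible S X := by
  have hprin : ∀ s : S, IsConstructible S (rIdeal s) := by
    intro s
    have := IsConstructible.mul (M := S) s .univ
    rwa [image_univ_eq] at this
  rcases h with rfl | ⟨s, rfl⟩ | ⟨s, rfl⟩
  · have h2 := IsConstructible.preimage (gen .a) (hprin (gen (.x 0)))
    have e : {m : S | gen .a * m ∈ rIdeal (gen (.x 0))} = ∅ := by
      ext m
      simp only [Set.mem_setOf_eq, Set.mem_empty_iff_false, iff_false]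
      rintro ⟨u, hu⟩
      exact ne_a_aux (g := .x 0) (by simp) (by simp) u m hu.symm
    rwa [e] at h2
  · exact hprin s
  · have h1 := IsConstructible.preimage (gen .a) (hprin (gen .b))
    have h2 := IsConstructible.preimage (gen .b) h1
    have e : {m : S | gen .b * m ∈ {p : S | gen .a * p ∈ rIdeal (gen .b)}} = Un 1 := by
      ext m
      simp only [Set.mem_setOf_eq]
      constructor
      · rintro ⟨u, hu⟩
        rcases ha_iff.mp hu with ⟨n, m', ⟨h1', _⟩ | ⟨h1', _⟩⟩
        · exact mem_Un.mpr (.inl ⟨n, m', by rw [one_mul]; exact cancel_gen h1'⟩)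
        · exact mem_Un.mpr (.inr ⟨n, m', by rw [one_mul]; exact cancel_gen h1'⟩)
      · intro hm
        rcases mem_Un.mp hm with ⟨n, u, h⟩ | ⟨n, u, h⟩
        · rw [one_mul] at h; subst h; exact ⟨gen (.x n) * u, rel_x n u⟩
        · rw [one_mul] at h; subst h; exact ⟨gen (.y (n+1)) * u, rel_y n u⟩
    rw [e] at h2
    rw [Un_eq_image s]
    exact IsConstructible.mul s h2

end SP

/-- The constructible right ideals of `S` are exactly `∅`, the principal right ideals `sS`,
and the ideals `⋃ₙ s xₙ S ∪ ⋃ₙ s yₙ S` for `s ∈ S`. -/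
theorem S_constructible_ideals (X : Set S) :
    IsConstructible S X ↔
      X = ∅ ∨ (∃ s : S, X = rIdeal s) ∨
        ∃ s : S, X = (⋃ n : ℤ, rIdeal (s * gen (.x n))) ∪ ⋃ n : ℤ, rIdeal (s * gen (.y n)) := by
  constructor
  · intro h
    exact SP.forward h
  · intro h
    exact SP.backward h
end

section
/- For each fixed n ∈ ℤ, the only constructible right ideals of the monoid S that contain the element y_n are S itself, y_n·S, and X = ⋃_{m ∈ ℤ} x_m·S ∪ ⋃_{m ∈ ℤ} y_m·S. -/
section

variable {M : Type*} [Monoid M]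

theorem rIdeal_eq_image (s : M) : rIdeal s = (s * ·) '' Set.univ := by
  ext m
  simp [rIdeal, eq_comm]

theorem Set.image_mul_left_mul (t w : M) (T : Set M) :
    (t * w * ·) '' T = (t * ·) '' ((w * ·) '' T) := by
  simp [Set.image_image, mul_assoc]

theorem Set.preimage_mul_left_image_mul [IsLeftCancelMul M] (t w : M) (T : Set M) :
    {m | t * m ∈ (t * w * ·) '' T} = (w * ·) '' T := by
  rw [Set.image_mul_left_mul]
  exact Set.preimage_image_eq _ (mul_right_injective t)

end

namespace SGen

def IsXY : SGen → Prop
  | x _ => True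
  | y _ => True
  | _ => False

def shift (d : ℤ) : SGen → SGen
  | y k => y (k + d)
  | g => g

theorem isXY_shift {c : SGen} {d : ℤ} : (c.shift d).IsXY ↔ c.IsXY := by
  cases c <;> simp [shift, IsXY]

@[simp]
theorem shift_shift (c : SGen) (d e : ℤ) : (c.shift d).shift e = c.shift (d + e) := by
  cases c <;> simp [shift, add_assoc]

@[simp]
theorem shift_zero (c : SGen) : c.shift 0 = c := by
  cases c <;> simp [shift]

theorem shift_injective (d : ℤ) : Function.Injective (shift d) := by
  intro c c' h
  cases c <;> cases c' <;> simp_all [shift]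

end SGen

namespace S

open SGen Set

theorem gen_a_mul_gen_b_mul {c : SGen} (hc : c.IsXY) (v : S) :
    gen .a * (gen .b * (gen c * v)) = gen .b * (gen (c.shift 1) * v) := by
  have hrel : gen .a * gen .b * gen c = gen .b * gen (c.shift 1) := by
    cases c <;> simp only [IsXY] at hc
    · exact PresentedMonoid.mk_eq_mk_of_rel (SRel.xr _)
    · exact PresentedMonoid.mk_eq_mk_of_rel (SRel.yr _)
  simp only [← mul_assoc, hrel]

@[elab_as_elim]
theorem gen_induction {P : S → Prop} (one : P 1) (gen_mul : ∀ g s, P s → P (gen g * s))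
    (s : S) : P s := by
  induction s using PresentedMonoid.inductionOn with
  | h u =>
    induction u using FreeMonoid.inductionOn' with
    | one => exact one
    | of_mul g u ih => rw [map_mul]; exact gen_mul g _ ih

/-- Left multiplication by a generator on words in normal form, i.e. words without a factor
`a b x_k` or `a b y_k`. -/
def step : SGen → List SGen → List SGen
  | .a, .b :: .x k :: L => .b :: .x k :: L
  | .a, .b :: .y k :: L => .b :: .y (k + 1) :: L
  | g, L => g :: L

theorem step_of_ne_a {g : SGen} (hg : g ≠ .a) (L : List SGen) : step g L = g :: L := by
  cases g <;> first | exact absurd rfl hg | rfl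

theorem step_a_cases (L : List SGen) :
    (∃ c M, c.IsXY ∧ L = .b :: c :: M ∧ step .a L = .b :: c.shift 1 :: M) ∨
      step .a L = .a :: L := by
  rcases L with _ | ⟨_ | _ | k | k, _ | ⟨_ | _ | j | j, M⟩⟩ <;>
    first | exact .inr rfl | exact .inl ⟨_, _, by trivial, rfl, rfl⟩

theorem step_injective (g : SGen) : Function.Injective (step g) := by
  intro L L' h
  by_cases hg : g = .a
  · subst hg
    rcases step_a_cases L with ⟨c, M, hc, rfl, hL⟩ | hL <;>
      rcases step_a_cases L' with ⟨c', M', hc', rfl, hL'⟩ | hL' <;>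
      rw [hL, hL'] at h <;> simp only [List.cons.injEq, reduceCtorEq, true_and, false_and] at h
    · rw [shift_injective 1 h.1, h.2]
    · exact h
  · rw [step_of_ne_a hg, step_of_ne_a hg] at h
    exact List.cons_injective h

theorem step_eq_cons (g : SGen) (L : List SGen) :
    ∃ N, step g L = g :: N ∨ (g = .a ∧ step g L = .b :: N) := by
  by_cases hg : g = .a
  · subst hg
    rcases step_a_cases L with ⟨c, M, -, -, hL⟩ | hL
    · exact ⟨_, .inr ⟨rfl, hL⟩⟩
    · exact ⟨_, .inl hL⟩
  · exact ⟨L, .inl (step_of_ne_a hg L)⟩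

def act : S →* Function.End (List SGen) :=
  PresentedMonoid.lift (M := Function.End (List SGen)) step (by rintro _ _ (_ | _) <;> rfl)

def nf (s : S) : List SGen := act s []

def ofList (L : List SGen) : S := (L.map gen).prod

theorem nf_one : nf 1 = [] := by
  rw [nf, map_one]
  rfl

theorem nf_gen_mul (g : SGen) (s : S) : nf (gen g * s) = step g (nf s) := by
  rw [nf, nf, map_mul]
  rfl

theorem ofList_cons (g : SGen) (L : List SGen) : ofList (g :: L) = gen g * ofList L := by
  simp [ofList]

theorem ofList_step (g : SGen) (L : List SGen) : ofList (step g L) = gen g * ofList L := by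
  by_cases hg : g = .a
  · subst hg
    rcases step_a_cases L with ⟨c, M, hc, rfl, hL⟩ | hL <;> rw [hL]
    · simp only [ofList_cons, gen_a_mul_gen_b_mul hc]
    · rw [ofList_cons]
  · rw [step_of_ne_a hg, ofList_cons]

theorem ofList_nf (s : S) : ofList (nf s) = s := by
  induction s using gen_induction with
  | one => rw [nf_one]; rfl
  | gen_mul g s ih => rw [nf_gen_mul, ofList_step, ih]

theorem nf_injective : Function.Injective nf :=
  Function.LeftInverse.injective ofList_nf

theorem eq_gen_mul_of_nf_eq_cons {s : S} {g : SGen} {L : List SGen} (h : nf s = g :: L) :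
    s = gen g * ofList L := by
  rw [← ofList_nf s, h, ofList_cons]

theorem gen_mul_ne_one (g : SGen) (s : S) : gen g * s ≠ 1 := by
  intro h
  obtain ⟨N, hN | ⟨-, hN⟩⟩ := step_eq_cons g (nf s) <;>
    simp [← nf_gen_mul, h, nf_one] at hN

theorem eq_one_or_eq_gen_mul (s : S) : s = 1 ∨ ∃ g t, s = gen g * t := by
  induction s using gen_induction with
  | one => exact .inl rfl
  | gen_mul g t _ => exact .inr ⟨g, t, rfl⟩

theorem eq_one_of_mul_eq_one {u v : S} (h : u * v = 1) : u = 1 ∧ v = 1 := by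
  obtain rfl | ⟨g, t, rfl⟩ := eq_one_or_eq_gen_mul u
  · exact ⟨rfl, by rwa [one_mul] at h⟩
  · exact absurd (by rwa [mul_assoc] at h) (gen_mul_ne_one g (t * v))

instance : IsLeftCancelMul S where
  mul_left_cancel u := by
    induction u using gen_induction with
    | one => intro v w h; simpa using h
    | gen_mul g t ih =>
      intro v w h
      simp only [mul_assoc] at h
      exact ih (nf_injective (step_injective g (by rw [← nf_gen_mul, ← nf_gen_mul, h])))

theorem gen_mul_ne_gen_mul {g g' : SGen} (hne : g ≠ g') (hab : ¬(g = .a ∧ g' = .b))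
    (hba : ¬(g = .b ∧ g' = .a)) (s s' : S) : gen g * s ≠ gen g' * s' := by
  intro h
  have hnf := congrArg nf h
  rw [nf_gen_mul, nf_gen_mul] at hnf
  obtain ⟨N, hN | ⟨rfl, hN⟩⟩ := step_eq_cons g (nf s) <;>
    obtain ⟨N', hN' | ⟨rfl, hN'⟩⟩ := step_eq_cons g' (nf s') <;>
    simp_all

theorem gen_mul_eq_gen_mul_iff_of_isXY {c : SGen} (hc : c.IsXY) {g : SGen} {v u : S} :
    gen c * v = gen g * u ↔ c = g ∧ v = u := by
  refine ⟨fun h => ?_, fun ⟨hg, hv⟩ => hg ▸ hv ▸ rfl⟩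
  by_cases hcg : c = g
  · exact ⟨hcg, mul_left_cancel (hcg ▸ h)⟩
  · refine absurd h (gen_mul_ne_gen_mul hcg ?_ ?_ v u) <;> rintro ⟨rfl, -⟩ <;> exact hc

theorem gen_a_mul_eq_gen_b_mul_iff {m z : S} :
    gen .a * m = gen .b * z ↔
      ∃ c v, c.IsXY ∧ m = gen .b * (gen c * v) ∧ z = gen (c.shift 1) * v := by
  refine ⟨fun h => ?_, fun ⟨c, v, hc, hm, hz⟩ => hm ▸ hz ▸ gen_a_mul_gen_b_mul hc v⟩
  have hnf := congrArg nf h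
  rw [nf_gen_mul, nf_gen_mul, step_of_ne_a (g := .b) (by simp)] at hnf
  obtain ⟨c, M, hc, hm, hM⟩ | hM := step_a_cases (nf m) <;> rw [hM] at hnf
  · simp only [List.cons.injEq, true_and] at hnf
    exact ⟨c, ofList M, hc, by simpa [ofList_cons] using eq_gen_mul_of_nf_eq_cons hm,
      eq_gen_mul_of_nf_eq_cons hnf.symm⟩
  · simp at hnf

def xyIdeal : Set S := (⋃ m : ℤ, rIdeal (gen (.x m))) ∪ ⋃ m : ℤ, rIdeal (gen (.y m))

theorem mem_xyIdeal {s : S} : s ∈ xyIdeal ↔ ∃ c v, c.IsXY ∧ s = gen c * v := by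
  simp only [xyIdeal, rIdeal, mem_union, mem_iUnion, mem_ofPred_eq]
  constructor
  · rintro (⟨k, v, rfl⟩ | ⟨k, v, rfl⟩) <;> exact ⟨_, v, by trivial, rfl⟩
  · rintro ⟨_ | _ | k | k, v, hc, rfl⟩
    · exact hc.elim
    · exact hc.elim
    · exact .inl ⟨k, v, rfl⟩
    · exact .inr ⟨k, v, rfl⟩

theorem gen_mul_mem_xyIdeal_iff {g : SGen} {m : S} : gen g * m ∈ xyIdeal ↔ g.IsXY := by
  refine ⟨fun h => ?_, fun hg => mem_xyIdeal.2 ⟨g, m, hg, rfl⟩⟩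
  obtain ⟨c, v, hc, h⟩ := mem_xyIdeal.1 h
  exact (gen_mul_eq_gen_mul_iff_of_isXY hc).1 h.symm |>.1 ▸ hc

theorem one_notMem_xyIdeal : (1 : S) ∉ xyIdeal := by
  rw [mem_xyIdeal]
  rintro ⟨c, v, -, h⟩
  exact gen_mul_ne_one c v h.symm

/-- The operation `Z ↦ {b⁻¹ a b z | z ∈ Z ∩ X}` for `d = 1`, and its inverse for `d = -1`. -/
def shiftHead (d : ℤ) (Z : Set S) : Set S :=
  {s | ∃ c v, c.IsXY ∧ gen c * v ∈ Z ∧ s = gen (c.shift d) * v}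

theorem preimage_gen_b_image_gen_a (Y : Set S) :
    {m | gen .b * m ∈ (gen .a * ·) '' Y} = shiftHead 1 {z | gen .b * z ∈ Y} := by
  ext m
  constructor
  · rintro ⟨y, hy, h⟩
    obtain ⟨c, v, hc, rfl, rfl⟩ := gen_a_mul_eq_gen_b_mul_iff.1 h
    exact ⟨c, v, hc, hy, rfl⟩
  · rintro ⟨c, v, hc, hz, rfl⟩
    exact ⟨_, hz, gen_a_mul_gen_b_mul hc v⟩

theorem preimage_gen_a_image_gen_b (Y : Set S) :
    {m | gen .a * m ∈ (gen .b * ·) '' Y} = (gen .b * ·) '' shiftHead (-1) Y := by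
  ext m
  constructor
  · rintro ⟨z, hz, h⟩
    obtain ⟨c, v, hc, rfl, rfl⟩ := gen_a_mul_eq_gen_b_mul_iff.1 h.symm
    exact ⟨_, ⟨c.shift 1, v, isXY_shift.2 hc, hz, by simp⟩, rfl⟩
  · rintro ⟨_, ⟨c, v, hc, hz, rfl⟩, rfl⟩
    exact ⟨_, hz, by simp [gen_a_mul_gen_b_mul (isXY_shift.2 hc)]⟩

theorem shiftHead_eq_xyIdeal (d : ℤ) {T : Set S} (hT : xyIdeal ⊆ T) :
    shiftHead d T = xyIdeal := by
  ext s
  constructor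
  · rintro ⟨c, v, hc, -, rfl⟩
    exact gen_mul_mem_xyIdeal_iff.2 (isXY_shift.2 hc)
  · intro hs
    obtain ⟨c, v, hc, rfl⟩ := mem_xyIdeal.1 hs
    exact ⟨c.shift (-d), v, isXY_shift.2 hc, hT (gen_mul_mem_xyIdeal_iff.2 (isXY_shift.2 hc)),
      by simp⟩

theorem xyIdeal_eq_preimage_image :
    xyIdeal = {m | gen .b * m ∈ {m' | gen .a * m' ∈ (gen .b * ·) '' univ}} := by
  rw [preimage_gen_a_image_gen_b, shiftHead_eq_xyIdeal _ (subset_univ _)]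
  exact (preimage_image_eq _ (mul_right_injective _)).symm

theorem gen_mul_mem_image_gen_mul_iff {c : SGen} (hc : c.IsXY) {g : SGen} {v w : S}
    {T : Set S} : gen c * v ∈ (gen g * w * ·) '' T ↔ c = g ∧ v ∈ (w * ·) '' T := by
  constructor
  · rintro ⟨t, ht, h⟩
    obtain ⟨rfl, rfl⟩ := (gen_mul_eq_gen_mul_iff_of_isXY hc).1 (h.symm.trans (mul_assoc _ _ _))
    exact ⟨rfl, t, ht, rfl⟩
  · rintro ⟨rfl, t, ht, rfl⟩
    exact ⟨t, ht, mul_assoc _ _ _⟩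

theorem shiftHead_image_gen_mul_of_isXY (d : ℤ) {g : SGen} (hg : g.IsXY) (w : S) (T : Set S) :
    shiftHead d ((gen g * w * ·) '' T) = (gen (g.shift d) * w * ·) '' T := by
  ext s
  constructor
  · rintro ⟨c, v, hc, hv, rfl⟩
    obtain ⟨rfl, t, ht, rfl⟩ := (gen_mul_mem_image_gen_mul_iff hc).1 hv
    exact ⟨t, ht, mul_assoc _ _ _⟩
  · rintro ⟨t, ht, rfl⟩
    exact ⟨g, w * t, hg, (gen_mul_mem_image_gen_mul_iff hg).2 ⟨rfl, t, ht, rfl⟩, mul_assoc _ _ _⟩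

theorem shiftHead_image_gen_mul_of_not_isXY (d : ℤ) {g : SGen} (hg : ¬g.IsXY) (w : S)
    (T : Set S) : shiftHead d ((gen g * w * ·) '' T) = ∅ := by
  refine eq_empty_of_forall_notMem ?_
  rintro s ⟨c, v, hc, hv, rfl⟩
  obtain ⟨rfl, -⟩ := (gen_mul_mem_image_gen_mul_iff hc).1 hv
  exact hg hc

def IsBasicIdeal (Y : Set S) : Prop :=
  Y = ∅ ∨ ∃ w T, (T = univ ∨ T = xyIdeal) ∧ Y = (w * ·) '' T

theorem isBasicIdeal_of_base {T : Set S} (hT : T = univ ∨ T = xyIdeal) : IsBasicIdeal T :=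
  .inr ⟨1, T, hT, by simp⟩

theorem IsBasicIdeal.image {Y : Set S} (hY : IsBasicIdeal Y) (t : S) :
    IsBasicIdeal ((t * ·) '' Y) := by
  obtain rfl | ⟨w, T, hT, rfl⟩ := hY
  · exact .inl (image_empty _)
  · exact .inr ⟨t * w, T, hT, by simp [image_image, mul_assoc]⟩

theorem IsBasicIdeal.shiftHead {Z : Set S} (hZ : IsBasicIdeal Z) (d : ℤ) :
    IsBasicIdeal (shiftHead d Z) := by
  obtain rfl | ⟨w, T, hT, rfl⟩ := hZ
  · exact .inl (by simp [S.shiftHead])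
  obtain rfl | ⟨g, w, rfl⟩ := eq_one_or_eq_gen_mul w
  · refine isBasicIdeal_of_base (.inr ?_)
    simp only [one_mul, image_id']
    exact shiftHead_eq_xyIdeal d (by rcases hT with rfl | rfl <;> simp)
  by_cases hg : g.IsXY
  · exact .inr ⟨_, T, hT, shiftHead_image_gen_mul_of_isXY d hg w T⟩
  · exact .inl (shiftHead_image_gen_mul_of_not_isXY d hg w T)

theorem IsBasicIdeal.preimage_gen {Y : Set S} (hY : IsBasicIdeal Y) (g : SGen) :
    IsBasicIdeal {m | gen g * m ∈ Y} := by
  obtain rfl | ⟨w, T, hT, rfl⟩ := hY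
  · exact .inl (eq_empty_of_forall_notMem fun _ h => h)
  induction w using gen_induction with
  | one =>
    simp only [one_mul, image_id']
    rcases hT with rfl | rfl
    · exact isBasicIdeal_of_base (.inl (by simp))
    · simp only [gen_mul_mem_xyIdeal_iff]
      by_cases hg : g.IsXY
      · exact isBasicIdeal_of_base (.inl (eq_univ_of_forall fun _ => hg))
      · exact .inl (eq_empty_of_forall_notMem fun _ => hg)
  | gen_mul g' w ih =>
    by_cases hgg : g = g'
    · subst hgg
      exact .inr ⟨w, T, hT, preimage_mul_left_image_mul _ _ _⟩
    by_cases hba : g = .b ∧ g' = .a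
    · obtain ⟨rfl, rfl⟩ := hba
      rw [image_mul_left_mul, preimage_gen_b_image_gen_a]
      exact ih.shiftHead 1
    by_cases hab : g = .a ∧ g' = .b
    · obtain ⟨rfl, rfl⟩ := hab
      rw [image_mul_left_mul, preimage_gen_a_image_gen_b]
      exact (IsBasicIdeal.shiftHead (.inr ⟨w, T, hT, rfl⟩) (-1)).image _
    · refine .inl (eq_empty_of_forall_notMem fun m ⟨t, _, h⟩ => ?_)
      exact gen_mul_ne_gen_mul hgg hab hba _ _ (h.symm.trans (mul_assoc _ _ _))

theorem IsBasicIdeal.preimage {Y : Set S} (hY : IsBasicIdeal Y) (t : S) :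
    IsBasicIdeal {m | t * m ∈ Y} := by
  induction t using gen_induction generalizing Y with
  | one => simpa using hY
  | gen_mul g t ih =>
    simp only [mul_assoc]
    exact ih (hY.preimage_gen g)

theorem _root_.IsConstructible.isBasicIdeal {Y : Set S} (hY : IsConstructible S Y) :
    IsBasicIdeal Y := by
  induction hY with
  | univ => exact isBasicIdeal_of_base (.inl rfl)
  | mul t _ ih => exact ih.image t
  | preimage t _ ih => exact ih.preimage t

theorem IsBasicIdeal.eq_of_gen_y_mem {Y : Set S} (hY : IsBasicIdeal Y) {n : ℤ}
    (hy : gen (.y n) ∈ Y) : Y = univ ∨ Y = rIdeal (gen (.y n)) ∨ Y = xyIdeal := by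
  obtain rfl | ⟨w, T, hT, rfl⟩ := hY
  · exact hy.elim
  obtain rfl | ⟨g, w, rfl⟩ := eq_one_or_eq_gen_mul w
  · simp only [one_mul, image_id']
    rcases hT with rfl | rfl
    · exact .inl rfl
    · exact .inr (.inr rfl)
  obtain ⟨t, ht, h⟩ := hy
  obtain ⟨rfl, hwt⟩ := (gen_mul_eq_gen_mul_iff_of_isXY (c := .y n) trivial).1
    ((mul_one _).trans (h.symm.trans (mul_assoc _ _ _)))
  obtain ⟨rfl, rfl⟩ := eq_one_of_mul_eq_one hwt.symm
  rcases hT with rfl | rfl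
  · exact .inr (.inl (rIdeal_eq_image _).symm)
  · exact (one_notMem_xyIdeal ht).elim

end S

/-- For each fixed `n ∈ ℤ`, the only constructible right ideals of `S` containing `yₙ`
are `S`, `yₙS` and `X = ⋃ₘ xₘ S ∪ ⋃ₘ yₘ S`. -/
theorem S_constructible_containing_y (n : ℤ) (X : Set S) :
    (IsConstructible S X ∧ gen (.y n) ∈ X) ↔
      (X = Set.univ ∨ X = rIdeal (gen (.y n)) ∨
        X = (⋃ m : ℤ, rIdeal (gen (.x m))) ∪ ⋃ m : ℤ, rIdeal (gen (.y m))) := by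
  refine ⟨fun ⟨hX, hy⟩ => hX.isBasicIdeal.eq_of_gen_y_mem hy, ?_⟩
  rintro (rfl | rfl | rfl)
  · exact ⟨.univ, trivial⟩
  · refine ⟨?_, 1, (mul_one _).symm⟩
    rw [rIdeal_eq_image]
    exact .mul _ .univ
  · refine ⟨?_, S.mem_xyIdeal.2 ⟨_, 1, by trivial, (mul_one _).symm⟩⟩
    rw [← S.xyIdeal, S.xyIdeal_eq_preimage_image]
    exact .preimage _ (.preimage _ (.mul _ .univ))
end

section
/- Let h be an element of the left inverse hull I_ℓ(S) of the monoid S whose domain contains X = ⋃_{n ∈ ℤ} x_n·S ∪ ⋃_{n ∈ ℤ} y_n·S and which fixes y_m for some m ∈ ℤ (i.e., y_m ∈ dom h and h(y_m) = y_m). Then h is the identity map of S or the identity map of X. -/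
namespace SW

/-- smart cons implementing the rewriting system -/
def cons' : SGen → List SGen → List SGen
  | .a, l =>
    match l with
    | .b :: .x n :: t => .b :: .x n :: t
    | .b :: .y n :: t => .b :: .y (n + 1) :: t
    | l => .a :: l
  | c, l => c :: l

@[simp] lemma cons'_b (l) : cons' .b l = .b :: l := rfl
@[simp] lemma cons'_x (n l) : cons' (.x n) l = .x n :: l := rfl
@[simp] lemma cons'_y (n l) : cons' (.y n) l = .y n :: l := rfl
@[simp] lemma cons'_a_bx (n t) : cons' .a (.b :: .x n :: t) = .b :: .x n :: t := rfl
@[simp] lemma cons'_a_by (n t) : cons' .a (.b :: .y n :: t) = .b :: .y (n + 1) :: t := rfl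
@[simp] lemma cons'_a_nil : cons' .a [] = [.a] := rfl
@[simp] lemma cons'_nil (c) : cons' c [] = [c] := by cases c <;> rfl

/-- case eliminator for `cons' .a` -/
lemma cons'_a_shape (l : List SGen) :
    (∃ n t, l = .b :: .x n :: t ∧ cons' .a l = l) ∨
    (∃ n t, l = .b :: .y n :: t ∧ cons' .a l = .b :: .y (n + 1) :: t) ∨
    (cons' .a l = .a :: l) := by
  match l with
  | [] => right; right; rfl
  | [c] => right; right; cases c <;> rfl
  | .a :: c :: t => right; right; rfl
  | .b :: c :: t =>
    cases c with
    | a => right; right; rfl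
    | b => right; right; rfl
    | x n => left; exact ⟨n, t, rfl, rfl⟩
    | y n => right; left; exact ⟨n, t, rfl, rfl⟩
  | .x m :: c :: t => right; right; rfl
  | .y m :: c :: t => right; right; rfl

def mul' (u v : List SGen) : List SGen := u.foldr cons' v

@[simp] lemma mul'_nil (v) : mul' [] v = v := rfl
lemma mul'_cons (c u v) : mul' (c :: u) v = cons' c (mul' u v) := rfl

def norm (u : List SGen) : List SGen := mul' u []

lemma key (c z w) : mul' (cons' c z) w = cons' c (mul' z w) := by
  cases c with
  | a =>
    rcases cons'_a_shape z with ⟨n, t, rfl, h⟩ | ⟨n, t, rfl, h⟩ | h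
    · rw [h]; simp [mul'_cons]
    · rw [h]; simp [mul'_cons]
    · rw [h, mul'_cons]
  | b => rfl
  | x n => rfl
  | y n => rfl

lemma mul'_assoc (u v w) : mul' (mul' u v) w = mul' u (mul' v w) := by
  induction u with
  | nil => rfl
  | cons c u ih => rw [mul'_cons, key, ih, mul'_cons]

lemma norm_mul' (u v) : norm (mul' u v) = mul' u (norm v) := mul'_assoc u v []

lemma mul'_norm_left (u v) : mul' (norm u) v = mul' u v := by
  rw [norm, mul'_assoc]; rfl

lemma norm_idem (u) : norm (norm u) = norm u := norm_mul' u []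

lemma norm_append (u v : List SGen) : norm (u ++ v) = mul' u (norm v) := by
  rw [norm, mul', List.foldr_append]; rfl


/-! ### head shifting and the set of X-headed words -/

def sh (j : ℤ) : List SGen → List SGen
  | .y n :: t => .y (n + j) :: t
  | l => l

@[simp] lemma sh_y (j n t) : sh j (.y n :: t) = .y (n + j) :: t := rfl
@[simp] lemma sh_x (j n t) : sh j (.x n :: t) = .x n :: t := rfl
@[simp] lemma sh_a (j t) : sh j (.a :: t) = .a :: t := rfl
@[simp] lemma sh_b (j t) : sh j (.b :: t) = .b :: t := rfl
@[simp] lemma sh_nil (j) : sh j [] = [] := rfl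

lemma sh_sh (j k : ℤ) (l) : sh j (sh k l) = sh (k + j) l := by
  match l with
  | [] => rfl
  | .a :: t => rfl
  | .b :: t => rfl
  | .x n :: t => rfl
  | .y n :: t => simp [add_assoc]

@[simp] lemma sh_zero (l) : sh 0 l = l := by
  match l with
  | [] => rfl
  | .a :: t => rfl
  | .b :: t => rfl
  | .x n :: t => rfl
  | .y n :: t => simp

def Xl : List SGen → Prop
  | .x _ :: _ => True
  | .y _ :: _ => True
  | _ => False

@[simp] lemma Xl_x (n t) : Xl (.x n :: t) := trivial
@[simp] lemma Xl_y (n t) : Xl (.y n :: t) := trivial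
@[simp] lemma not_Xl_a (t) : ¬ Xl (.a :: t) := fun h => h
@[simp] lemma not_Xl_b (t) : ¬ Xl (.b :: t) := fun h => h
@[simp] lemma not_Xl_nil : ¬ Xl ([] : List SGen) := fun h => h

lemma Xl_cases {l} (h : Xl l) : (∃ n t, l = .x n :: t) ∨ (∃ n t, l = .y n :: t) := by
  match l with
  | .x n :: t => exact Or.inl ⟨n, t, rfl⟩
  | .y n :: t => exact Or.inr ⟨n, t, rfl⟩
  | [] => exact absurd h not_Xl_nil
  | .a :: t => exact absurd h (not_Xl_a t)
  | .b :: t => exact absurd h (not_Xl_b t)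

@[simp] lemma Xl_sh (j l) : Xl (sh j l) ↔ Xl l := by
  match l with
  | [] => rfl
  | .a :: t => rfl
  | .b :: t => rfl
  | .x n :: t => rfl
  | .y n :: t => simp

lemma sh_sh_cancel (j : ℤ) (l) : sh j (sh (-j) l) = l := by rw [sh_sh]; simp

/-- `cons' c` is injective. -/
lemma cons'_inj {c A B} (h : cons' c A = cons' c B) : A = B := by
  cases c with
  | b => simpa using h
  | x n => simpa using h
  | y n => simpa using h
  | a =>
    rcases cons'_a_shape A with ⟨n, t, rfl, h1⟩ | ⟨n, t, rfl, h1⟩ | h1 <;>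
      rcases cons'_a_shape B with ⟨m, s, rfl, h2⟩ | ⟨m, s, rfl, h2⟩ | h2 <;>
      rw [h1, h2] at h <;> simp_all

/-- `cons' .a` produces a word with head `a` or `b`. -/
lemma not_Xl_cons'_a (l) : ¬ Xl (cons' .a l) := by
  rcases cons'_a_shape l with ⟨n, t, rfl, h1⟩ | ⟨n, t, rfl, h1⟩ | h1 <;> rw [h1] <;> simp

lemma K2 (A B : List SGen) :
    cons' .a A = .b :: B ↔ (Xl B ∧ A = .b :: sh (-1) B) := by
  constructor
  · intro h
    rcases cons'_a_shape A with ⟨n, t, rfl, h1⟩ | ⟨n, t, rfl, h1⟩ | h1 <;> rw [h1] at h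
    · obtain rfl : B = .x n :: t := by simpa using h.symm
      simp
    · obtain rfl : B = .y (n+1) :: t := by simpa using h.symm
      simp [show n + 1 + -1 = n by ring]
    · simp at h
  · rintro ⟨hB, rfl⟩
    rcases Xl_cases hB with ⟨n, t, rfl⟩ | ⟨n, t, rfl⟩
    · simp
    · simp [show n + -1 + 1 = n by ring]


/-! ### equation analysis lemmas -/

lemma cons'_inj_iff {c A B} : cons' c A = cons' c B ↔ A = B :=
  ⟨cons'_inj, fun h => h ▸ rfl⟩

@[simp] lemma cons'_eq_x {c A n M} : cons' c A = .x n :: M ↔ (c = .x n ∧ A = M) := by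
  cases c with
  | a =>
    constructor
    · intro h
      rcases cons'_a_shape A with ⟨k, t, rfl, h1⟩ | ⟨k, t, rfl, h1⟩ | h1 <;> rw [h1] at h <;>
        simp_all
    · rintro ⟨h, -⟩; exact absurd h (by simp)
  | b => simp
  | x k => simp
  | y k => simp
@[simp] lemma cons'_eq_y {c A n M} : cons' c A = .y n :: M ↔ (c = .y n ∧ A = M) := by
  cases c with
  | a =>
    constructor
    · intro h
      rcases cons'_a_shape A with ⟨k, t, rfl, h1⟩ | ⟨k, t, rfl, h1⟩ | h1 <;> rw [h1] at h <;>
        simp_all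
    · rintro ⟨h, -⟩; exact absurd h (by simp)
  | b => simp
  | x k => simp
  | y k => simp

lemma cons'_eq_b {c A M} : cons' c A = .b :: M ↔
    ((c = .b ∧ A = M) ∨ (c = .a ∧ Xl M ∧ A = .b :: sh (-1) M)) := by
  cases c with
  | a => rw [K2]; simp
  | b => simp
  | x k => simp
  | y k => simp

/-! ### the answer forms -/

def Ans (E : List SGen → List SGen → Prop) : Prop :=
  (∀ V W, ¬ E V W) ∨
  (∃ R1 R2, ∀ V W, E V W ↔ ∃ U, V = mul' R1 U ∧ W = mul' R2 U) ∨
  (∃ R1 R2 : List SGen, ∃ j : ℤ, ∀ V W, E V W ↔ ∃ U, Xl U ∧ V = mul' R1 (sh j U) ∧ W = mul' R2 U)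

lemma ansEmpty {E} (h : ∀ V W, ¬ E V W) : Ans E := Or.inl h
lemma ansI {E} (R1 R2) (h : ∀ V W, E V W ↔ ∃ U, V = mul' R1 U ∧ W = mul' R2 U) : Ans E :=
  Or.inr (Or.inl ⟨R1, R2, h⟩)
lemma ansII {E} (R1 R2) (j : ℤ)
    (h : ∀ V W, E V W ↔ ∃ U, Xl U ∧ V = mul' R1 (sh j U) ∧ W = mul' R2 U) : Ans E :=
  Or.inr (Or.inr ⟨R1, R2, j, h⟩)

lemma ansCongr {E E'} (h : ∀ V W, E V W ↔ E' V W) (hA : Ans E') : Ans E := by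
  rcases hA with hE | ⟨R1, R2, hR⟩ | ⟨R1, R2, j, hR⟩
  · exact ansEmpty fun V W hVW => hE V W ((h V W).1 hVW)
  · exact ansI R1 R2 fun V W => (h V W).trans (hR V W)
  · exact ansII R1 R2 j fun V W => (h V W).trans (hR V W)

lemma ansSwap {E} (hA : Ans E) : Ans (fun V W => E W V) := by
  rcases hA with hE | ⟨R1, R2, hR⟩ | ⟨R1, R2, j, hR⟩
  · exact ansEmpty fun V W hVW => hE W V hVW
  · refine ansI R2 R1 fun V W => (hR W V).trans ⟨fun ⟨U, h1, h2⟩ => ⟨U, h2, h1⟩,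
      fun ⟨U, h1, h2⟩ => ⟨U, h2, h1⟩⟩
  · refine ansII R2 R1 (-j) fun V W => (hR W V).trans ?_
    constructor
    · rintro ⟨U, hU, rfl, rfl⟩
      refine ⟨sh j U, by simpa using hU, ?_, rfl⟩
      rw [sh_sh]; simp
    · rintro ⟨U, hU, rfl, rfl⟩
      refine ⟨sh (-j) U, by simpa using hU, ?_, rfl⟩
      rw [sh_sh]; simp


/-! ### the main classification of solution sets of `p·v = q·w` -/

def All (P Q : List SGen) : Prop :=
  Ans (fun V W => mul' P V = mul' Q W) ∧
  (∀ j : ℤ, Ans (fun V W => mul' P V = sh j (mul' Q W) ∧ Xl (mul' Q W))) ∧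
  (∀ j : ℤ, Ans (fun V W => mul' P V = .b :: sh j (mul' Q W) ∧ Xl (mul' Q W)))

lemma step1 (P Q : List SGen)
    (H : ∀ P' Q' : List SGen, P'.length + Q'.length < P.length + Q.length → All P' Q') :
    ∀ j : ℤ, Ans (fun V W => mul' P V = sh j (mul' Q W) ∧ Xl (mul' Q W)) := by
  intro j
  cases Q with
  | nil =>
    cases P with
    | nil =>
      apply ansII [] [] j; intro V W
      simp only [mul'_nil]
      constructor
      · rintro ⟨rfl, hW⟩; exact ⟨W, hW, rfl, rfl⟩
      · rintro ⟨U, hU, rfl, rfl⟩; exact ⟨rfl, hU⟩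
    | cons c P'' =>
      cases c with
      | a =>
        apply ansEmpty; rintro V W ⟨h1, h2⟩
        have h3 : Xl (sh j (mul' [] W)) := by simpa using h2
        rw [← h1, mul'_cons] at h3
        exact not_Xl_cons'_a _ h3
      | b =>
        apply ansEmpty; rintro V W ⟨h1, h2⟩
        have h3 : Xl (sh j (mul' [] W)) := by simpa using h2
        rw [← h1, mul'_cons, cons'_b] at h3
        exact not_Xl_b _ h3
      | x n =>
        apply ansI [] (.x n :: P''); intro V W
        simp only [mul'_nil, mul'_cons, cons'_x]
        constructor
        · rintro ⟨h1, h2⟩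
          rcases Xl_cases h2 with ⟨k, t, rfl⟩ | ⟨k, t, rfl⟩
          · rw [sh_x] at h1
            exact ⟨V, rfl, h1.symm⟩
          · rw [sh_y] at h1; simp at h1
        · rintro ⟨U, rfl, rfl⟩; simp
      | y n =>
        apply ansI [] (.y (n - j) :: P''); intro V W
        simp only [mul'_nil, mul'_cons, cons'_y]
        constructor
        · rintro ⟨h1, h2⟩
          rcases Xl_cases h2 with ⟨k, t, rfl⟩ | ⟨k, t, rfl⟩
          · rw [sh_x] at h1; simp at h1
          · rw [sh_y] at h1
            obtain ⟨hk, ht⟩ : SGen.y n = SGen.y (k + j) ∧ mul' P'' V = t := by simpa using h1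
            have hk' : k = n - j := by have := SGen.y.inj hk; omega
            exact ⟨V, rfl, by rw [hk', ht]⟩
        · rintro ⟨U, rfl, rfl⟩
          constructor
          · rw [sh_y]; congr 2; omega
          · simp
  | cons d Q' =>
    cases d with
    | a =>
      apply ansEmpty; rintro V W ⟨h1, h2⟩
      rw [mul'_cons] at h2
      exact not_Xl_cons'_a _ h2
    | b =>
      apply ansEmpty; rintro V W ⟨h1, h2⟩
      rw [mul'_cons, cons'_b] at h2
      exact not_Xl_b _ h2
    | x m =>
      have key' : ∀ V W, ((mul' P V = sh j (mul' (.x m :: Q') W) ∧ Xl (mul' (.x m :: Q') W)) ↔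
          mul' P V = .x m :: mul' Q' W) := by
        intro V W; simp [mul'_cons]
      cases P with
      | nil =>
        apply ansI (.x m :: Q') []; intro V W
        rw [key' V W]
        simp only [mul'_nil, mul'_cons, cons'_x]
        constructor
        · rintro rfl; exact ⟨W, rfl, rfl⟩
        · rintro ⟨U, rfl, rfl⟩; rfl
      | cons c P' =>
        have key'' : ∀ V W, ((mul' (c :: P') V = sh j (mul' (.x m :: Q') W) ∧
            Xl (mul' (.x m :: Q') W)) ↔ (c = .x m ∧ mul' P' V = mul' Q' W)) := by
          intro V W; rw [key' V W, mul'_cons, cons'_eq_x]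
        cases c with
        | x n =>
          by_cases hnm : n = m
          · subst hnm
            exact ansCongr (fun V W => by rw [key'' V W]; simp)
              (H P' Q' (by simp [List.length_cons]; omega)).1
          · apply ansEmpty; intro V W h
            rw [key'' V W] at h
            exact hnm (SGen.x.inj h.1)
        | a => apply ansEmpty; intro V W h; rw [key'' V W] at h; simp at h
        | b => apply ansEmpty; intro V W h; rw [key'' V W] at h; simp at h
        | y n => apply ansEmpty; intro V W h; rw [key'' V W] at h; simp at h
    | y m =>
      have key' : ∀ V W, ((mul' P V = sh j (mul' (.y m :: Q') W) ∧ Xl (mul' (.y m :: Q') W)) ↔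
          mul' P V = .y (m + j) :: mul' Q' W) := by
        intro V W; simp [mul'_cons]
      cases P with
      | nil =>
        apply ansI (.y (m + j) :: Q') []; intro V W
        rw [key' V W]
        simp only [mul'_nil, mul'_cons, cons'_y]
        constructor
        · rintro rfl; exact ⟨W, rfl, rfl⟩
        · rintro ⟨U, rfl, rfl⟩; rfl
      | cons c P' =>
        have key'' : ∀ V W, ((mul' (c :: P') V = sh j (mul' (.y m :: Q') W) ∧
            Xl (mul' (.y m :: Q') W)) ↔ (c = .y (m + j) ∧ mul' P' V = mul' Q' W)) := by
          intro V W; rw [key' V W, mul'_cons, cons'_eq_y]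
        cases c with
        | y n =>
          by_cases hnm : n = m + j
          · subst hnm
            exact ansCongr (fun V W => by rw [key'' V W]; simp)
              (H P' Q' (by simp [List.length_cons]; omega)).1
          · apply ansEmpty; intro V W h
            rw [key'' V W] at h
            exact hnm (SGen.y.inj h.1)
        | a => apply ansEmpty; intro V W h; rw [key'' V W] at h; simp at h
        | b => apply ansEmpty; intro V W h; rw [key'' V W] at h; simp at h
        | x n => apply ansEmpty; intro V W h; rw [key'' V W] at h; simp at h


lemma step2 (P Q : List SGen)
    (H : ∀ P' Q' : List SGen, P'.length + Q'.length < P.length + Q.length → All P' Q') :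
    ∀ j : ℤ, Ans (fun V W => mul' P V = .b :: sh j (mul' Q W) ∧ Xl (mul' Q W)) := by
  intro j
  cases P with
  | nil =>
    cases Q with
    | nil =>
      apply ansII [.b] [] j; intro V W
      simp only [mul'_nil, mul'_cons, cons'_b]
      constructor
      · rintro ⟨rfl, hW⟩; exact ⟨W, hW, rfl, rfl⟩
      · rintro ⟨U, hU, rfl, rfl⟩; exact ⟨rfl, hU⟩
    | cons d Q' =>
      cases d with
      | a =>
        apply ansEmpty; rintro V W ⟨h1, h2⟩
        rw [mul'_cons] at h2; exact not_Xl_cons'_a _ h2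
      | b =>
        apply ansEmpty; rintro V W ⟨h1, h2⟩
        rw [mul'_cons, cons'_b] at h2; exact not_Xl_b _ h2
      | x m =>
        apply ansI (.b :: .x m :: Q') []; intro V W
        simp only [mul'_nil, mul'_cons, cons'_x, cons'_b, sh_x]
        constructor
        · rintro ⟨rfl, -⟩; exact ⟨W, rfl, rfl⟩
        · rintro ⟨U, rfl, rfl⟩; simp
      | y m =>
        apply ansI (.b :: .y (m + j) :: Q') []; intro V W
        simp only [mul'_nil, mul'_cons, cons'_y, cons'_b, sh_y]
        constructor
        · rintro ⟨rfl, -⟩; exact ⟨W, rfl, rfl⟩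
        · rintro ⟨U, rfl, rfl⟩; simp
  | cons c P' =>
    cases c with
    | b =>
      refine ansCongr (fun V W => ?_) ((H P' Q (by simp [List.length_cons])).2.1 j)
      rw [mul'_cons, cons'_b]
      simp
    | a =>
      refine ansCongr (fun V W => ?_) ((H P' Q (by simp [List.length_cons])).2.2 (j + -1))
      rw [mul'_cons]
      constructor
      · rintro ⟨h1, h2⟩
        rw [K2] at h1
        refine ⟨?_, h2⟩
        rw [h1.2, sh_sh]
      · rintro ⟨h1, h2⟩
        refine ⟨?_, h2⟩
        rw [K2]
        refine ⟨by simpa using h2, ?_⟩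
        rw [h1, sh_sh]
    | x n =>
      apply ansEmpty; rintro V W ⟨h1, h2⟩
      rw [mul'_cons, cons'_x] at h1; simp at h1
    | y n =>
      apply ansEmpty; rintro V W ⟨h1, h2⟩
      rw [mul'_cons, cons'_y] at h1; simp at h1

lemma step0 (P Q : List SGen)
    (H : ∀ P' Q' : List SGen, P'.length + Q'.length < P.length + Q.length → All P' Q') :
    Ans (fun V W => mul' P V = mul' Q W) := by
  cases P with
  | nil =>
    apply ansI Q []; intro V W
    simp only [mul'_nil]
    constructor
    · rintro rfl; exact ⟨W, rfl, rfl⟩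
    · rintro ⟨U, rfl, rfl⟩; rfl
  | cons c P' =>
    cases Q with
    | nil =>
      apply ansI [] (c :: P'); intro V W
      simp only [mul'_nil]
      constructor
      · rintro rfl; exact ⟨V, rfl, rfl⟩
      · rintro ⟨U, rfl, rfl⟩; rfl
    | cons d Q' =>
      have hlen : P'.length + Q'.length < (c :: P').length + (d :: Q').length := by
        simp [List.length_cons]; omega
      cases c with
      | a =>
        cases d with
        | a =>
          exact ansCongr (fun V W => by rw [mul'_cons, mul'_cons, cons'_inj_iff])
            (H P' Q' hlen).1
        | b =>
          refine ansCongr (fun V W => ?_) ((H P' Q' hlen).2.2 (-1))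
          rw [mul'_cons, mul'_cons, cons'_b, K2]
          simp [and_comm]
        | x m =>
          apply ansEmpty; intro V W h
          rw [mul'_cons, mul'_cons, cons'_x, cons'_eq_x] at h
          simp at h
        | y m =>
          apply ansEmpty; intro V W h
          rw [mul'_cons, mul'_cons, cons'_y, cons'_eq_y] at h
          simp at h
      | b =>
        cases d with
        | a =>
          refine ansCongr (fun V W => ?_) (ansSwap ((H Q' P' (by omega)).2.2 (-1)))
          rw [mul'_cons, mul'_cons, cons'_b]
          rw [show (SGen.b :: mul' P' V = cons' .a (mul' Q' W)) ↔
              (cons' .a (mul' Q' W) = SGen.b :: mul' P' V) from eq_comm, K2]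
          simp [and_comm]
        | b =>
          exact ansCongr (fun V W => by rw [mul'_cons, mul'_cons, cons'_inj_iff])
            (H P' Q' hlen).1
        | x m =>
          apply ansEmpty; intro V W h
          rw [mul'_cons, mul'_cons, cons'_b, cons'_x] at h; simp at h
        | y m =>
          apply ansEmpty; intro V W h
          rw [mul'_cons, mul'_cons, cons'_b, cons'_y] at h; simp at h
      | x n =>
        cases d with
        | a =>
          apply ansEmpty; intro V W h
          rw [mul'_cons, mul'_cons, cons'_x] at h
          rw [show (SGen.x n :: mul' P' V = cons' .a (mul' Q' W)) ↔
              (cons' .a (mul' Q' W) = SGen.x n :: mul' P' V) from eq_comm, cons'_eq_x] at h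
          simp at h
        | b =>
          apply ansEmpty; intro V W h
          rw [mul'_cons, mul'_cons, cons'_x, cons'_b] at h; simp at h
        | x m =>
          by_cases hnm : n = m
          · subst hnm
            exact ansCongr (fun V W => by rw [mul'_cons, mul'_cons, cons'_inj_iff])
              (H P' Q' hlen).1
          · apply ansEmpty; intro V W h
            rw [mul'_cons, mul'_cons, cons'_x, cons'_x] at h
            exact hnm (SGen.x.inj (List.head_eq_of_cons_eq h))
        | y m =>
          apply ansEmpty; intro V W h
          rw [mul'_cons, mul'_cons, cons'_x, cons'_y] at h; simp at h
      | y n =>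
        cases d with
        | a =>
          apply ansEmpty; intro V W h
          rw [mul'_cons, mul'_cons, cons'_y] at h
          rw [show (SGen.y n :: mul' P' V = cons' .a (mul' Q' W)) ↔
              (cons' .a (mul' Q' W) = SGen.y n :: mul' P' V) from eq_comm, cons'_eq_y] at h
          simp at h
        | b =>
          apply ansEmpty; intro V W h
          rw [mul'_cons, mul'_cons, cons'_y, cons'_b] at h; simp at h
        | x m =>
          apply ansEmpty; intro V W h
          rw [mul'_cons, mul'_cons, cons'_y, cons'_x] at h; simp at h
        | y m =>
          by_cases hnm : n = m
          · subst hnm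
            exact ansCongr (fun V W => by rw [mul'_cons, mul'_cons, cons'_inj_iff])
              (H P' Q' hlen).1
          · apply ansEmpty; intro V W h
            rw [mul'_cons, mul'_cons, cons'_y, cons'_y] at h
            exact hnm (SGen.y.inj (List.head_eq_of_cons_eq h))

theorem allPQ (P Q : List SGen) : All P Q := by
  suffices h : ∀ (n : ℕ) (P Q : List SGen), P.length + Q.length = n → All P Q from
    h _ P Q rfl
  intro n
  induction n using Nat.strong_induction_on with
  | _ n IH =>
    intro P Q hn
    have H : ∀ P' Q' : List SGen, P'.length + Q'.length < P.length + Q.length → All P' Q' :=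
      fun P' Q' h => IH _ (by omega) P' Q' rfl
    exact ⟨step0 P Q H, step1 P Q H, step2 P Q H⟩


end SW

namespace SW

/-- the embedding of words into `S` -/
def emb (l : List SGen) : S := PresentedMonoid.mk SRel (FreeMonoid.ofList l)

lemma emb_append (u v : List SGen) : emb (u ++ v) = emb u * emb v :=
  map_mul (PresentedMonoid.mk SRel) (FreeMonoid.ofList u) (FreeMonoid.ofList v)

lemma emb_nil : emb [] = 1 := rfl

lemma emb_rel {u v : List SGen} (h : ConGen.Rel SRel (FreeMonoid.ofList u) (FreeMonoid.ofList v)) :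
    emb u = emb v := Quotient.sound h

lemma emb_cons' (c : SGen) (l : List SGen) : emb (cons' c l) = emb (c :: l) := by
  cases c with
  | b => rfl
  | x n => rfl
  | y n => rfl
  | a =>
    rcases cons'_a_shape l with ⟨n, t, rfl, h1⟩ | ⟨n, t, rfl, h1⟩ | h1
    · rw [h1]
      exact (emb_rel (ConGen.Rel.mul (ConGen.Rel.of _ _ (SRel.xr n))
        (ConGen.Rel.refl (FreeMonoid.ofList t)))).symm
    · rw [h1]
      exact (emb_rel (ConGen.Rel.mul (ConGen.Rel.of _ _ (SRel.yr n))
        (ConGen.Rel.refl (FreeMonoid.ofList t)))).symm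
    · rw [h1]

lemma emb_mul' (u v : List SGen) : emb (mul' u v) = emb u * emb v := by
  induction u with
  | nil => rw [mul'_nil, emb_nil, one_mul]
  | cons c u ih =>
    rw [mul'_cons, emb_cons', show (c :: mul' u v) = [c] ++ mul' u v from rfl, emb_append, ih,
      show (c :: u) = [c] ++ u from rfl, emb_append, mul_assoc]

lemma emb_norm (u : List SGen) : emb (norm u) = emb u := by
  rw [norm, emb_mul', emb_nil, mul_one]

/-- soundness of `norm` on congruence classes -/
lemma norm_sound {u v : FreeMonoid SGen} (h : ConGen.Rel SRel u v) :
    norm (FreeMonoid.toList u) = norm (FreeMonoid.toList v) := by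
  induction h with
  | of u v huv =>
    cases huv with
    | xr n => rfl
    | yr n => rfl
  | refl => rfl
  | symm _ ih => exact ih.symm
  | trans _ _ ih1 ih2 => exact ih1.trans ih2
  | mul _ _ ih1 ih2 =>
    show norm (_ ++ _) = norm (_ ++ _)
    rw [norm_append, norm_append, ih2, ← mul'_norm_left, ih1, mul'_norm_left]

/-- the normal form of an element of `S` -/
def nf (s : S) : List SGen :=
  Quotient.liftOn s (fun w => norm (FreeMonoid.toList w)) fun _ _ h => norm_sound h

lemma nf_emb (l : List SGen) : nf (emb l) = norm l := rfl

lemma emb_nf (s : S) : emb (nf s) = s := by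
  refine PresentedMonoid.inductionOn s ?_
  intro w
  exact emb_norm (FreeMonoid.toList w)

lemma nf_norm (s : S) : norm (nf s) = nf s := by
  refine PresentedMonoid.inductionOn s ?_
  intro w
  exact norm_idem (FreeMonoid.toList w)

lemma nf_inj {s t : S} (h : nf s = nf t) : s = t := by
  rw [← emb_nf s, ← emb_nf t, h]

lemma nf_mul (s t : S) : nf (s * t) = mul' (nf s) (nf t) := by
  refine PresentedMonoid.inductionOn s ?_
  intro u
  refine PresentedMonoid.inductionOn t ?_
  intro v
  show nf (emb (FreeMonoid.toList u) * emb (FreeMonoid.toList v)) = _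
  rw [← emb_append, nf_emb, norm_append]
  show _ = mul' (norm _) (norm _)
  rw [mul'_norm_left]

lemma nf_one : nf (1 : S) = [] := rfl

lemma gen_eq_emb (c : SGen) : gen c = emb [c] := rfl

lemma nf_gen (c : SGen) : nf (gen c) = [c] := by
  rw [gen_eq_emb, nf_emb]
  exact cons'_nil c

lemma nf_eq_nil {s : S} : nf s = [] ↔ s = 1 := by
  constructor
  · intro h; exact nf_inj (by rw [h, nf_one])
  · rintro rfl; rfl


/-! ### more list lemmas about `sh`, `Xl`, lengths -/

lemma sh_of_not_Xl {l : List SGen} (h : ¬ Xl l) (j : ℤ) : sh j l = l := by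
  match l with
  | [] => rfl
  | .a :: t => rfl
  | .b :: t => rfl
  | .x n :: t => exact absurd (Xl_x n t) h
  | .y n :: t => exact absurd (Xl_y n t) h

lemma norm_sh (j : ℤ) (l : List SGen) : norm (sh j l) = sh j (norm l) := by
  match l with
  | [] => rfl
  | .a :: t =>
    rw [sh_a]
    show norm (.a :: t) = sh j (norm (.a :: t))
    rw [norm, mul'_cons]
    exact (sh_of_not_Xl (not_Xl_cons'_a _) j).symm
  | .b :: t => rw [sh_b]; show norm (.b :: t) = sh j (norm (.b :: t)); rw [norm, mul'_cons, cons'_b, sh_b]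
  | .x n :: t => rw [sh_x]; show norm (.x n :: t) = sh j (norm (.x n :: t)); rw [norm, mul'_cons, cons'_x, sh_x]
  | .y n :: t =>
    rw [sh_y]
    show norm (.y (n+j) :: t) = sh j (norm (.y n :: t))
    rw [norm, mul'_cons, cons'_y, norm, mul'_cons, cons'_y, sh_y]

lemma Xl_cons'_iff (c : SGen) (K : List SGen) :
    Xl (cons' c K) ↔ (∃ n, c = .x n ∨ c = .y n) := by
  cases c with
  | a => simp only [not_Xl_cons'_a]; simp
  | b => simp
  | x n => simp [Xl_x]
  | y n => simp [Xl_y]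

lemma Xl_mul' (L M : List SGen) : Xl (mul' L M) ↔ (Xl L ∨ (L = [] ∧ Xl M)) := by
  cases L with
  | nil => simp
  | cons c L' =>
    rw [mul'_cons, Xl_cons'_iff]
    cases c <;> simp

lemma Xl_norm (l : List SGen) : Xl (norm l) ↔ Xl l := by
  rw [norm, Xl_mul']
  cases l <;> simp

lemma len_cons'_ge (c : SGen) (K : List SGen) : K.length ≤ (cons' c K).length := by
  cases c with
  | a =>
    rcases cons'_a_shape K with ⟨n, t, rfl, h1⟩ | ⟨n, t, rfl, h1⟩ | h1 <;> rw [h1] <;> simp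
  | b => simp
  | x n => simp
  | y n => simp

lemma len_mul'_ge (L M : List SGen) : M.length ≤ (mul' L M).length := by
  induction L with
  | nil => simp [mul'_nil]
  | cons c L' ih => rw [mul'_cons]; exact le_trans ih (len_cons'_ge c _)

lemma len_cons'_two (c : SGen) {K : List SGen} (h : K ≠ []) : 2 ≤ (cons' c K).length := by
  have h1 : 1 ≤ K.length := by
    cases K with
    | nil => exact absurd rfl h
    | cons _ _ => simp
  cases c with
  | a =>
    rcases cons'_a_shape K with ⟨n, t, rfl, h2⟩ | ⟨n, t, rfl, h2⟩ | h2 <;> rw [h2] <;>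
      simp <;> omega
  | b => simp; omega
  | x n => simp; omega
  | y n => simp; omega

lemma mul'_single {Q : List SGen} {c0 c1 : SGen} (h : mul' Q [c0] = [c1]) : Q = [] := by
  cases Q with
  | nil => rfl
  | cons c Q' =>
    exfalso
    rw [mul'_cons] at h
    have h2 : 2 ≤ (cons' c (mul' Q' [c0])).length := by
      apply len_cons'_two
      intro hnil
      have := len_mul'_ge Q' [c0]
      rw [hnil] at this
      simp at this
    rw [h] at h2
    simp at h2


end SW

/-- We encode partial bijections of a monoid `M` by their graphs, i.e. subsets of `M × M`.
`InLeftHull M G` says that the partial map with graph `G` belongs to the left inverse hull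
`I_ℓ(M)` of `M`: the smallest collection of partial bijections of `M` containing the left
translations `m ↦ s·m` (with domain all of `M`) for every `s ∈ M` and closed under taking
inverses and compositions. -/
inductive InLeftHull (M : Type*) [Monoid M] : Set (M × M) → Prop
  | translation (s : M) : InLeftHull M {p | p.2 = s * p.1}
  | inv {G : Set (M × M)} : InLeftHull M G → InLeftHull M {p | (p.2, p.1) ∈ G}
  | comp {G H : Set (M × M)} : InLeftHull M G → InLeftHull M H →
      InLeftHull M {p | ∃ z, (p.1, z) ∈ G ∧ (z, p.2) ∈ H}

/-- The domain of a partial map encoded by its graph. -/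
def pDom {M : Type*} (G : Set (M × M)) : Set M := {m | ∃ y, (m, y) ∈ G}

namespace SW

/-- the set `X` -/
def XS : Set S := (⋃ n : ℤ, rIdeal (gen (.x n))) ∪ ⋃ n : ℤ, rIdeal (gen (.y n))

lemma mem_XS {s : S} : s ∈ XS ↔ Xl (nf s) := by
  constructor
  · intro h
    rcases h with h | h <;> rw [Set.mem_iUnion] at h <;> obtain ⟨n, u, rfl⟩ := h <;>
      rw [nf_mul, nf_gen, mul'_cons] <;> simp
  · intro h
    rcases Xl_cases h with ⟨n, t, hnt⟩ | ⟨n, t, hnt⟩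
    · left
      rw [Set.mem_iUnion]
      refine ⟨n, emb t, ?_⟩
      rw [← emb_nf s, hnt, show (SGen.x n :: t) = [SGen.x n] ++ t from rfl, emb_append,
        ← gen_eq_emb]
    · right
      rw [Set.mem_iUnion]
      refine ⟨n, emb t, ?_⟩
      rw [← emb_nf s, hnt, show (SGen.y n :: t) = [SGen.y n] ++ t from rfl, emb_append,
        ← gen_eq_emb]

lemma one_not_mem_XS : (1 : S) ∉ XS := by
  rw [mem_XS, nf_one]
  exact not_Xl_nil

/-- the shift bijection of `S` -/
def Sh (k : ℤ) (s : S) : S := emb (sh k (nf s))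

lemma nf_Sh (k : ℤ) (s : S) : nf (Sh k s) = sh k (nf s) := by
  rw [Sh, nf_emb, norm_sh, nf_norm]

lemma Sh_emb (k : ℤ) (l : List SGen) : Sh k (emb l) = emb (sh k l) := by
  rw [Sh, nf_emb, ← norm_sh, emb_norm]

@[simp] lemma Sh_zero (s : S) : Sh 0 s = s := by
  rw [Sh, sh_zero, emb_nf]

lemma Sh_Sh (j k : ℤ) (s : S) : Sh j (Sh k s) = Sh (k + j) s := by
  rw [Sh, nf_Sh, sh_sh, ← Sh]

lemma Sh_mem_XS {k : ℤ} {s : S} : Sh k s ∈ XS ↔ s ∈ XS := by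
  rw [mem_XS, mem_XS, nf_Sh, Xl_sh]

lemma Sh_mul_X {s : S} (h : s ∈ XS) (k : ℤ) (u : S) : Sh k (s * u) = Sh k s * u := by
  rw [mem_XS] at h
  have hlist : sh k (mul' (nf s) (nf u)) = mul' (sh k (nf s)) (nf u) := by
    rcases Xl_cases h with ⟨n, t, hnt⟩ | ⟨n, t, hnt⟩ <;> rw [hnt] <;>
      simp [mul'_cons]
  rw [Sh, nf_mul, hlist, emb_mul', ← Sh, emb_nf]

lemma mem_XS_mul {s u : S} : s * u ∈ XS ↔ (s ∈ XS ∨ (s = 1 ∧ u ∈ XS)) := by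
  rw [mem_XS, mem_XS, mem_XS, nf_mul, Xl_mul', nf_eq_nil]

lemma Sh_gen_y (k : ℤ) (n : ℤ) : Sh k (gen (.y n)) = gen (.y (n + k)) := by
  rw [gen_eq_emb, Sh_emb, sh_y, ← gen_eq_emb]

/-! ### solving `p v = q w` in `S` -/

theorem solveS (p q : S) :
    (∀ v w : S, p * v ≠ q * w) ∨
    (∃ r1 r2 : S, ∀ v w : S, p * v = q * w ↔ ∃ u, v = r1 * u ∧ w = r2 * u) ∨
    (∃ r1 r2 : S, ∃ j : ℤ, ∀ v w : S,
      p * v = q * w ↔ ∃ u ∈ XS, v = r1 * Sh j u ∧ w = r2 * u) := by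
  have base : ∀ v w : S, p * v = q * w ↔ mul' (nf p) (nf v) = mul' (nf q) (nf w) := by
    intro v w
    constructor
    · intro h; rw [← nf_mul, ← nf_mul, h]
    · intro h; exact nf_inj (by rw [nf_mul, nf_mul, h])
  rcases (allPQ (nf p) (nf q)).1 with hE | ⟨R1, R2, hR⟩ | ⟨R1, R2, j, hR⟩
  · exact Or.inl fun v w h => hE (nf v) (nf w) ((base v w).1 h)
  · refine Or.inr (Or.inl ⟨emb R1, emb R2, fun v w => (base v w).trans ?_⟩)
    constructor
    · intro h
      obtain ⟨U, hV, hW⟩ := (hR (nf v) (nf w)).1 h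
      refine ⟨emb U, ?_, ?_⟩
      · rw [← emb_nf v, hV, emb_mul']
      · rw [← emb_nf w, hW, emb_mul']
    · rintro ⟨u, rfl, rfl⟩
      apply (hR _ _).2
      refine ⟨nf u, ?_, ?_⟩
      · rw [nf_mul, nf_emb, mul'_norm_left]
      · rw [nf_mul, nf_emb, mul'_norm_left]
  · refine Or.inr (Or.inr ⟨emb R1, emb R2, j, fun v w => (base v w).trans ?_⟩)
    constructor
    · intro h
      obtain ⟨U, hU, hV, hW⟩ := (hR (nf v) (nf w)).1 h
      refine ⟨emb U, ?_, ?_, ?_⟩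
      · rw [mem_XS, nf_emb, Xl_norm]; exact hU
      · rw [← emb_nf v, hV, emb_mul', Sh_emb]
      · rw [← emb_nf w, hW, emb_mul']
    · rintro ⟨u, hu, rfl, rfl⟩
      apply (hR _ _).2
      refine ⟨nf u, (mem_XS).1 hu, ?_, ?_⟩
      · rw [nf_mul, nf_emb, mul'_norm_left, nf_Sh]
      · rw [nf_mul, nf_emb, mul'_norm_left]


/-! ### the two shapes of elements of the left inverse hull -/

def FA (t q : S) : Set (S × S) := {p | ∃ v, p.1 = t * v ∧ p.2 = q * v}
def FB (t q : S) (k : ℤ) : Set (S × S) := {p | ∃ v ∈ XS, p.1 = t * v ∧ p.2 = q * Sh k v}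

def Good (G : Set (S × S)) : Prop :=
  G = ∅ ∨ (∃ t q, G = FA t q) ∨ (∃ t q k, G = FB t q k)

lemma setB' (t q : S) (j k : ℤ) :
    {p : S × S | ∃ u ∈ XS, p.1 = t * Sh j u ∧ p.2 = q * Sh k u} = FB t q (k - j) := by
  ext ⟨xx, yy⟩
  simp only [Set.mem_setOf_eq, FB]
  constructor
  · rintro ⟨u, hu, rfl, rfl⟩
    refine ⟨Sh j u, Sh_mem_XS.2 hu, rfl, ?_⟩
    rw [Sh_Sh, show j + (k - j) = k by ring]
  · rintro ⟨v, hv, rfl, rfl⟩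
    refine ⟨Sh (-j) v, Sh_mem_XS.2 hv, ?_, ?_⟩
    · rw [Sh_Sh, show -j + j = 0 by ring, Sh_zero]
    · rw [Sh_Sh, show -j + k = k - j by ring]

lemma sideResolve (e : Bool) (t r : S) (k : ℤ) (hek : e = false → k = 0) :
    (e = true ∧ ∀ u : S, (r * u) ∉ XS) ∨
    (∃ (T : S) (k' : ℤ) (f : Bool), (f = false → k' = 0) ∧
      (∀ u : S, t * Sh k (r * u) = T * Sh k' u) ∧
      (∀ u : S, (e = true → r * u ∈ XS) ↔ (f = true → u ∈ XS))) := by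
  cases e with
  | false =>
    right
    refine ⟨t * r, 0, false, fun _ => rfl, fun u => ?_, fun u => by simp⟩
    rw [hek rfl, Sh_zero, Sh_zero, mul_assoc]
  | true =>
    by_cases hr : r ∈ XS
    · right
      refine ⟨t * Sh k r, 0, false, fun _ => rfl, fun u => ?_, fun u => ?_⟩
      · rw [Sh_mul_X hr, Sh_zero, mul_assoc]
      · simp only [Bool.true_eq, Bool.false_eq_true, false_implies, iff_true, forall_const]
        exact mem_XS_mul.2 (Or.inl hr)
    · by_cases hr1 : r = 1
      · subst hr1
        right
        refine ⟨t, k, true, by simp, fun u => by rw [one_mul], fun u => by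
          simp [one_mul, mem_XS_mul, hr]⟩
      · left
        refine ⟨rfl, fun u hu => ?_⟩
        rcases mem_XS_mul.1 hu with h | ⟨h, _⟩
        exacts [hr h, hr1 h]

/-- canonical form of a composite before solving the middle equation -/
def CanonSet (e1 e2 : Bool) (t1 q2 q1 t2 : S) (k1 k2 : ℤ) : Set (S × S) :=
  {p | ∃ v w : S, (e1 = true → v ∈ XS) ∧ (e2 = true → w ∈ XS) ∧ q1 * v = t2 * w ∧
      p.1 = t1 * Sh k1 v ∧ p.2 = q2 * Sh k2 w}

lemma goodMain (e1 e2 : Bool) (t1 q2 q1 t2 : S) (k1 k2 : ℤ)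
    (hek1 : e1 = false → k1 = 0) (hek2 : e2 = false → k2 = 0) :
    Good (CanonSet e1 e2 t1 q2 q1 t2 k1 k2) := by
  rcases solveS q1 t2 with hE | ⟨r1, r2, hiff⟩ | ⟨r1, r2, j, hiff⟩
  · left
    ext ⟨xx, yy⟩
    simp only [CanonSet, Set.mem_setOf_eq, Set.mem_empty_iff_false, iff_false, not_exists]
    rintro v w ⟨_, _, hmid, _, _⟩
    exact hE v w hmid
  · -- type I solutions
    rcases sideResolve e1 t1 r1 k1 hek1 with ⟨he1, hbad⟩ | ⟨T1, k1', f1, hf1, hT1, hc1⟩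
    · left
      ext ⟨xx, yy⟩
      simp only [CanonSet, Set.mem_setOf_eq, Set.mem_empty_iff_false, iff_false, not_exists]
      rintro v w ⟨c1, _, hmid, _, _⟩
      obtain ⟨u, rfl, rfl⟩ := (hiff v w).1 hmid
      exact hbad u (c1 he1)
    rcases sideResolve e2 q2 r2 k2 hek2 with ⟨he2, hbad⟩ | ⟨T2, k2', f2, hf2, hT2, hc2⟩
    · left
      ext ⟨xx, yy⟩
      simp only [CanonSet, Set.mem_setOf_eq, Set.mem_empty_iff_false, iff_false, not_exists]
      rintro v w ⟨_, c2, hmid, _, _⟩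
      obtain ⟨u, rfl, rfl⟩ := (hiff v w).1 hmid
      exact hbad u (c2 he2)
    have hset : CanonSet e1 e2 t1 q2 q1 t2 k1 k2 =
        {p : S × S | ∃ u, (f1 = true → u ∈ XS) ∧ (f2 = true → u ∈ XS) ∧
          p.1 = T1 * Sh k1' u ∧ p.2 = T2 * Sh k2' u} := by
      ext ⟨xx, yy⟩
      simp only [CanonSet, Set.mem_setOf_eq]
      constructor
      · rintro ⟨v, w, c1, c2, hmid, h1, h2⟩
        obtain ⟨u, rfl, rfl⟩ := (hiff v w).1 hmid
        exact ⟨u, (hc1 u).1 c1, (hc2 u).1 c2, by rw [h1, hT1], by rw [h2, hT2]⟩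
      · rintro ⟨u, d1, d2, rfl, rfl⟩
        exact ⟨r1 * u, r2 * u, (hc1 u).2 d1, (hc2 u).2 d2, (hiff _ _).2 ⟨u, rfl, rfl⟩,
          (hT1 u).symm, (hT2 u).symm⟩
    rw [hset]
    by_cases hf : f1 = true ∨ f2 = true
    · right; right
      refine ⟨T1, T2, k2' - k1', ?_⟩
      rw [← setB' T1 T2 k1' k2']
      ext ⟨xx, yy⟩
      simp only [Set.mem_setOf_eq]
      constructor
      · rintro ⟨u, d1, d2, rfl, rfl⟩
        rcases hf with hf | hf
        · exact ⟨u, d1 hf, rfl, rfl⟩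
        · exact ⟨u, d2 hf, rfl, rfl⟩
      · rintro ⟨u, hu, rfl, rfl⟩
        exact ⟨u, fun _ => hu, fun _ => hu, rfl, rfl⟩
    · push_neg at hf
      obtain ⟨hf1', hf2'⟩ : f1 = false ∧ f2 = false := by
        constructor <;> [skip; skip] <;> simp_all [Bool.not_eq_true] 
      right; left
      refine ⟨T1, T2, ?_⟩
      ext ⟨xx, yy⟩
      simp only [Set.mem_setOf_eq, FA]
      constructor
      · rintro ⟨u, -, -, rfl, rfl⟩
        exact ⟨u, by rw [hf1 hf1', Sh_zero], by rw [hf2 hf2', Sh_zero]⟩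
      · rintro ⟨u, rfl, rfl⟩
        exact ⟨u, by simp [hf1'], by simp [hf2'],
          by rw [hf1 hf1', Sh_zero], by rw [hf2 hf2', Sh_zero]⟩
  · -- type II solutions
    rcases sideResolve e1 t1 r1 k1 hek1 with ⟨he1, hbad⟩ | ⟨T1, k1', f1, hf1, hT1, hc1⟩
    · left
      ext ⟨xx, yy⟩
      simp only [CanonSet, Set.mem_setOf_eq, Set.mem_empty_iff_false, iff_false, not_exists]
      rintro v w ⟨c1, _, hmid, _, _⟩
      obtain ⟨u, hu, rfl, rfl⟩ := (hiff v w).1 hmid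
      exact hbad (Sh j u) (c1 he1)
    rcases sideResolve e2 q2 r2 k2 hek2 with ⟨he2, hbad⟩ | ⟨T2, k2', f2, hf2, hT2, hc2⟩
    · left
      ext ⟨xx, yy⟩
      simp only [CanonSet, Set.mem_setOf_eq, Set.mem_empty_iff_false, iff_false, not_exists]
      rintro v w ⟨_, c2, hmid, _, _⟩
      obtain ⟨u, hu, rfl, rfl⟩ := (hiff v w).1 hmid
      exact hbad u (c2 he2)
    right; right
    refine ⟨T1, T2, k2' - (j + k1'), ?_⟩
    rw [← setB' T1 T2 (j + k1') k2']
    ext ⟨xx, yy⟩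
    simp only [CanonSet, Set.mem_setOf_eq]
    constructor
    · rintro ⟨v, w, c1, c2, hmid, h1, h2⟩
      obtain ⟨u, hu, rfl, rfl⟩ := (hiff v w).1 hmid
      refine ⟨u, hu, ?_, ?_⟩
      · rw [h1, hT1 (Sh j u), Sh_Sh]
      · rw [h2, hT2 u]
    · rintro ⟨u, hu, rfl, rfl⟩
      refine ⟨r1 * Sh j u, r2 * u, ?_, ?_, (hiff _ _).2 ⟨u, hu, rfl, rfl⟩, ?_, ?_⟩
      · exact (hc1 (Sh j u)).2 (fun _ => Sh_mem_XS.2 hu)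
      · exact (hc2 u).2 (fun _ => hu)
      · rw [hT1 (Sh j u), Sh_Sh]
      · rw [hT2 u]

lemma goodTrans (s : S) : Good {p : S × S | p.2 = s * p.1} := by
  right; left
  refine ⟨1, s, ?_⟩
  ext ⟨xx, yy⟩
  simp only [Set.mem_setOf_eq, FA]
  constructor
  · rintro rfl; exact ⟨xx, (one_mul xx).symm, rfl⟩
  · rintro ⟨v, rfl, rfl⟩; rw [one_mul]

lemma goodInv {G : Set (S × S)} (hG : Good G) : Good {p : S × S | (p.2, p.1) ∈ G} := by
  rcases hG with rfl | ⟨t, q, rfl⟩ | ⟨t, q, k, rfl⟩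
  · left; ext ⟨xx, yy⟩; simp
  · right; left
    refine ⟨q, t, ?_⟩
    ext ⟨xx, yy⟩
    simp only [Set.mem_setOf_eq, FA]
    exact ⟨fun ⟨v, h1, h2⟩ => ⟨v, h2, h1⟩, fun ⟨v, h1, h2⟩ => ⟨v, h2, h1⟩⟩
  · right; right
    refine ⟨q, t, 0 - k, ?_⟩
    rw [← setB' q t k 0]
    ext ⟨xx, yy⟩
    simp only [Set.mem_setOf_eq, FB]
    constructor
    · rintro ⟨v, hv, rfl, rfl⟩
      exact ⟨v, hv, rfl, by rw [Sh_zero]⟩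
    · rintro ⟨v, hv, rfl, rfl⟩
      exact ⟨v, hv, by rw [Sh_zero], rfl⟩

lemma goodComp {G H : Set (S × S)} (hG : Good G) (hH : Good H) :
    Good {p : S × S | ∃ z, (p.1, z) ∈ G ∧ (z, p.2) ∈ H} := by
  rcases hG with rfl | ⟨t1, q1, rfl⟩ | ⟨t1, q1, k1, rfl⟩
  · left; ext ⟨xx, yy⟩; simp
  · rcases hH with rfl | ⟨t2, q2, rfl⟩ | ⟨t2, q2, k2, rfl⟩
    · left; ext ⟨xx, yy⟩; simp
    · have hset : {p : S × S | ∃ z, (p.1, z) ∈ FA t1 q1 ∧ (z, p.2) ∈ FA t2 q2} =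
          CanonSet false false t1 q2 q1 t2 0 0 := by
        ext ⟨xx, yy⟩
        simp only [Set.mem_setOf_eq, FA, CanonSet]
        constructor
        · rintro ⟨z, ⟨v, rfl, rfl⟩, ⟨w, hz, rfl⟩⟩
          exact ⟨v, w, by simp, by simp, hz, by rw [Sh_zero], by rw [Sh_zero]⟩
        · rintro ⟨v, w, -, -, hmid, h1, h2⟩
          exact ⟨q1 * v, ⟨v, by rw [h1, Sh_zero], rfl⟩, ⟨w, hmid, by rw [h2, Sh_zero]⟩⟩
      rw [hset]
      exact goodMain _ _ _ _ _ _ _ _ (fun _ => rfl) (fun _ => rfl)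
    · have hset : {p : S × S | ∃ z, (p.1, z) ∈ FA t1 q1 ∧ (z, p.2) ∈ FB t2 q2 k2} =
          CanonSet false true t1 q2 q1 t2 0 k2 := by
        ext ⟨xx, yy⟩
        simp only [Set.mem_setOf_eq, FA, FB, CanonSet]
        constructor
        · rintro ⟨z, ⟨v, rfl, rfl⟩, ⟨w, hw, hz, rfl⟩⟩
          exact ⟨v, w, by simp, fun _ => hw, hz, by rw [Sh_zero], rfl⟩
        · rintro ⟨v, w, -, hw, hmid, h1, h2⟩
          exact ⟨q1 * v, ⟨v, by rw [h1, Sh_zero], rfl⟩, ⟨w, hw (by trivial), hmid, h2⟩⟩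
      rw [hset]
      exact goodMain _ _ _ _ _ _ _ _ (fun _ => rfl) (by simp)
  · rcases hH with rfl | ⟨t2, q2, rfl⟩ | ⟨t2, q2, k2, rfl⟩
    · left; ext ⟨xx, yy⟩; simp
    · have hset : {p : S × S | ∃ z, (p.1, z) ∈ FB t1 q1 k1 ∧ (z, p.2) ∈ FA t2 q2} =
          CanonSet true false t1 q2 q1 t2 (-k1) 0 := by
        ext ⟨xx, yy⟩
        simp only [Set.mem_setOf_eq, FA, FB, CanonSet]
        constructor
        · rintro ⟨z, ⟨v, hv, rfl, rfl⟩, ⟨w, hz, rfl⟩⟩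
          refine ⟨Sh k1 v, w, fun _ => Sh_mem_XS.2 hv, by simp, hz, ?_, by rw [Sh_zero]⟩
          rw [Sh_Sh, show k1 + -k1 = 0 by ring, Sh_zero]
        · rintro ⟨v, w, hv, -, hmid, h1, h2⟩
          refine ⟨q1 * v, ⟨Sh (-k1) v, Sh_mem_XS.2 (hv (by trivial)), h1, ?_⟩, ⟨w, hmid, by rw [h2, Sh_zero]⟩⟩
          rw [Sh_Sh, show -k1 + k1 = 0 by ring, Sh_zero]
      rw [hset]
      exact goodMain _ _ _ _ _ _ _ _ (by simp) (fun _ => rfl)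
    · have hset : {p : S × S | ∃ z, (p.1, z) ∈ FB t1 q1 k1 ∧ (z, p.2) ∈ FB t2 q2 k2} =
          CanonSet true true t1 q2 q1 t2 (-k1) k2 := by
        ext ⟨xx, yy⟩
        simp only [Set.mem_setOf_eq, FB, CanonSet]
        constructor
        · rintro ⟨z, ⟨v, hv, rfl, rfl⟩, ⟨w, hw, hz, rfl⟩⟩
          refine ⟨Sh k1 v, w, fun _ => Sh_mem_XS.2 hv, fun _ => hw, hz, ?_, rfl⟩
          rw [Sh_Sh, show k1 + -k1 = 0 by ring, Sh_zero]
        · rintro ⟨v, w, hv, hw, hmid, h1, h2⟩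
          refine ⟨q1 * v, ⟨Sh (-k1) v, Sh_mem_XS.2 (hv (by trivial)), h1, ?_⟩, ⟨w, hw (by trivial), hmid, h2⟩⟩
          rw [Sh_Sh, show -k1 + k1 = 0 by ring, Sh_zero]
      rw [hset]
      exact goodMain _ _ _ _ _ _ _ _ (by simp) (by simp)

theorem hullGood {G : Set (S × S)} (hG : InLeftHull S G) : Good G := by
  induction hG with
  | translation s => exact goodTrans s
  | inv _ ih => exact goodInv ih
  | comp _ _ ih1 ih2 => exact goodComp ih1 ih2

/-! ### final arguments -/

lemma t_eq_one {t : S} (hx : ∃ v, gen (.x 0) = t * v) (hy : ∃ v, gen (.y 0) = t * v) :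
    t = 1 := by
  obtain ⟨v, hv⟩ := hx
  obtain ⟨w, hw⟩ := hy
  rcases hnf : nf t with _ | ⟨c, T'⟩
  · exact nf_eq_nil.1 hnf
  · exfalso
    have h1 : cons' c (mul' T' (nf v)) = [SGen.x 0] := by
      rw [← mul'_cons, ← hnf, ← nf_mul, ← hv, nf_gen]
    have h2 : cons' c (mul' T' (nf w)) = [SGen.y 0] := by
      rw [← mul'_cons, ← hnf, ← nf_mul, ← hw, nf_gen]
    rw [show [SGen.x 0] = SGen.x 0 :: ([] : List SGen) from rfl, cons'_eq_x] at h1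
    rw [show [SGen.y 0] = SGen.y 0 :: ([] : List SGen) from rfl, cons'_eq_y] at h2
    rw [h1.1] at h2
    simp at h2

lemma q_fix {q : S} {m : ℤ} (h : gen (.y m) = q * gen (.y m)) : q = 1 := by
  have h' : nf (gen (SGen.y m)) = nf (q * gen (SGen.y m)) := by rw [← h]
  rw [nf_gen, nf_mul, nf_gen] at h'
  exact nf_eq_nil.1 (mul'_single h'.symm)

lemma q_fix_sh {q : S} {k m : ℤ} (h : gen (.y m) = q * Sh k (gen (.y m))) : q = 1 ∧ k = 0 := by
  rw [Sh_gen_y] at h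
  have h' : nf (gen (SGen.y m)) = nf (q * gen (SGen.y (m + k))) := by rw [← h]
  rw [nf_gen, nf_mul, nf_gen] at h'
  have hq : q = 1 := nf_eq_nil.1 (mul'_single h'.symm)
  subst hq
  rw [one_mul] at h
  have h'' : nf (gen (SGen.y m)) = nf (gen (SGen.y (m + k))) := by rw [← h]
  rw [nf_gen, nf_gen] at h''
  have : m = m + k := by
    have := List.head_eq_of_cons_eq h''
    exact SGen.y.inj this
  exact ⟨rfl, by omega⟩

end SW

/-- If `h ∈ I_ℓ(S)` has domain containing `X = ⋃ₙ xₙ S ∪ ⋃ₙ yₙ S` and fixes `yₘ` for some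
`m ∈ ℤ`, then `h` is the identity map of `S` or the identity map of `X`. -/
theorem S_hull_fixing_y (G : Set (S × S)) (hG : InLeftHull S G)
    (hdom : ((⋃ n : ℤ, rIdeal (gen (.x n))) ∪ ⋃ n : ℤ, rIdeal (gen (.y n))) ⊆ pDom G)
    (hfix : ∃ m : ℤ, (gen (.y m), gen (.y m)) ∈ G) :
    G = {p : S × S | p.2 = p.1} ∨
      G = {p : S × S |
        p.1 ∈ (⋃ n : ℤ, rIdeal (gen (.x n))) ∪ ⋃ n : ℤ, rIdeal (gen (.y n)) ∧ p.2 = p.1} := by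
  obtain ⟨m, hm⟩ := hfix
  have hXdom : ∀ s ∈ SW.XS, s ∈ pDom G := fun s hs => hdom hs
  have hx0 : gen (.x 0) ∈ pDom G :=
    hXdom _ (by rw [SW.mem_XS, SW.nf_gen]; exact SW.Xl_x 0 [])
  have hy0 : gen (.y 0) ∈ pDom G :=
    hXdom _ (by rw [SW.mem_XS, SW.nf_gen]; exact SW.Xl_y 0 [])
  rcases SW.hullGood hG with rfl | ⟨t, q, rfl⟩ | ⟨t, q, k, rfl⟩
  · exact absurd hm (by simp)
  · -- the full-translation case; `h` must be the identity of `S`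
    obtain ⟨y1, v1, hv1, -⟩ := hx0
    obtain ⟨y2, v2, hv2, -⟩ := hy0
    have ht : t = 1 := SW.t_eq_one ⟨v1, hv1⟩ ⟨v2, hv2⟩
    subst ht
    obtain ⟨v, hv, hq⟩ := hm
    rw [one_mul] at hv
    rw [← hv] at hq
    have hq1 : q = 1 := SW.q_fix hq
    subst hq1
    left
    ext ⟨xx, yy⟩
    simp only [SW.FA, Set.mem_setOf_eq, one_mul]
    constructor
    · rintro ⟨v, rfl, rfl⟩; rfl
    · rintro rfl; exact ⟨_, rfl, rfl⟩
  · -- the partial case; `h` must be the identity of `X`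
    obtain ⟨y1, v1, -, hv1, -⟩ := hx0
    obtain ⟨y2, v2, -, hv2, -⟩ := hy0
    have ht : t = 1 := SW.t_eq_one ⟨v1, hv1⟩ ⟨v2, hv2⟩
    subst ht
    obtain ⟨v, hvX, hv, hq⟩ := hm
    rw [one_mul] at hv
    rw [← hv] at hq hvX
    obtain ⟨hq1, hk0⟩ := SW.q_fix_sh hq
    subst hq1
    subst hk0
    right
    ext ⟨xx, yy⟩
    simp only [SW.FB, Set.mem_setOf_eq, one_mul, SW.Sh_zero]
    constructor
    · rintro ⟨v, hv, rfl, rfl⟩; exact ⟨hv, rfl⟩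
    · rintro ⟨h1, rfl⟩; exact ⟨_, h1, rfl, rfl⟩
end
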